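/- arXiv:1511.07832 — 5 statements merged into one kernel-verified Lean document; each statement's English description precedes it below -/
import Mathlib

section
/- Let X be a finite subset of S^1 and 0 < r ≤ 1, with f_r : X → X defined as above. Then all periodic orbits of f_r have the same length ℓ and the same winding number w. -/
noncomputable section

instance : Fact ((0:ℝ) < 1) := ⟨zero_lt_one⟩

/-- Clockwise distance on the circle `S¹ = ℝ/ℤ`: the representative of `y - x` in `[0,1)`. -/
noncomputable def cdist (x y : AddCircle (1:ℝ)) : ℝ :=
  ((AddCircle.equivIco 1 0) (y - x)).1

/-- `f` is the cyclic dynamical system map `f_r` on the finite set `X`. -/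
def IsCyclicMap (X : Finset (AddCircle (1:ℝ))) (r : ℝ)
    (f : AddCircle (1:ℝ) → AddCircle (1:ℝ)) : Prop :=
  ∀ x ∈ X, f x ∈ X ∧ cdist x (f x) < r ∧
    ∀ y ∈ X, cdist x y < r → cdist x y ≤ cdist x (f x)

/-- The winding number of the periodic orbit through `x`, of length `ℓ`:
`Σ_{i=0}^{ℓ-1} d⃗(f^i x, f^{i+1} x)`. -/
noncomputable def winding (f : AddCircle (1:ℝ) → AddCircle (1:ℝ))
    (x : AddCircle (1:ℝ)) (ℓ : ℕ) : ℝ :=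
  ∑ i ∈ Finset.range ℓ, cdist (f^[i] x) (f^[i+1] x)

/-!
Lift `f` to `F t = t + d⃗(t, f t)` on `ℝ`. This map commutes with integer translations, and the
maximality in the definition of `f_r` makes it monotone on the preimage of `X`. A periodic orbit
of length `ℓ` and winding number `w` is a lift `s` with `F^ℓ s = s + w`. Comparing the iterates
of two such lifts by monotonicity shows that all of them have the same rotation number `w / ℓ`;
hence every periodic lift is a periodic point of the monotone map `u ↦ F^ℓ u - w`, so a fixed
point of it, and `ℓ` is a period of every periodic orbit.
-/

open Function Set

lemma MonotoneOn.iterate {α : Type*} [Preorder α] {T : α → α} {S : Set α}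
    (hmono : MonotoneOn T S) (hmaps : MapsTo T S S) (n : ℕ) : MonotoneOn T^[n] S := by
  induction n with
  | zero => exact monotoneOn_id
  | succ n ih => rw [iterate_succ]; exact ih.comp hmono hmaps

lemma MonotoneOn.monotone_iterate_of_le_map {α : Type*} [Preorder α] {T : α → α} {S : Set α}
    (hmono : MonotoneOn T S) (hmaps : MapsTo T S S) {t : α} (ht : t ∈ S) (hle : t ≤ T t) :
    Monotone fun n => T^[n] t := by
  refine monotone_nat_of_le_succ fun n => ?_
  induction n with
  | zero => exact hle
  | succ n ih =>
    rw [iterate_succ_apply' T (n + 1)]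
    conv_lhs => rw [iterate_succ_apply']
    exact hmono (hmaps.iterate n ht) (hmaps.iterate (n + 1) ht) ih

lemma MonotoneOn.isFixedPt_of_isPeriodicPt {α : Type*} [LinearOrder α] {T : α → α} {S : Set α}
    (hmono : MonotoneOn T S) (hmaps : MapsTo T S S) {t : α} (ht : t ∈ S) {n : ℕ} (hn : 0 < n)
    (hper : IsPeriodicPt T n t) : IsFixedPt T t := by
  rcases le_total t (T t) with hle | hle
  · have h : T^[1] t ≤ T^[n] t := hmono.monotone_iterate_of_le_map hmaps ht hle hn
    rw [iterate_one, hper.eq] at h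
    exact le_antisymm h hle
  · have h : T^[n] t ≤ T^[1] t := hmono.dual.monotone_iterate_of_le_map hmaps ht hle hn
    rw [iterate_one, hper.eq] at h
    exact le_antisymm hle h

section DegreeOneLift

variable {F : ℝ → ℝ} {S : Set ℝ}

lemma iterate_add_intCast (hF : ∀ t (m : ℤ), F (t + m) = F t + m) (n : ℕ) (t : ℝ) (m : ℤ) :
    F^[n] (t + m) = F^[n] t + m := by
  induction n generalizing t with
  | zero => rfl
  | succ n ih => rw [iterate_succ_apply, iterate_succ_apply, ← ih, hF]

lemma iterate_mul_eq_add_mul (hF : ∀ t (m : ℤ), F (t + m) = F t + m) {ℓ : ℕ} {s : ℝ} {w : ℤ}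
    (h : F^[ℓ] s = s + w) (n : ℕ) : F^[n * ℓ] s = s + ((n * w : ℤ) : ℝ) := by
  induction n with
  | zero => simp
  | succ n ih =>
    rw [Nat.succ_mul, iterate_add_apply, h, iterate_add_intCast hF, ih]
    push_cast
    ring

/-- After shifting `t` by an integer to lie above `s`, monotonicity of `F^[n ℓ ℓ']` bounds
`n (ℓ' w - ℓ w')` by a constant independent of `n`. -/
lemma mul_le_mul_of_iterate_eq_add (hF : ∀ t (m : ℤ), F (t + m) = F t + m)
    (hS : ∀ t ∈ S, ∀ m : ℤ, t + m ∈ S) (hmaps : MapsTo F S S) (hmono : MonotoneOn F S)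
    {s t : ℝ} (hs : s ∈ S) (ht : t ∈ S) {ℓ ℓ' : ℕ} {w w' : ℤ}
    (hsw : F^[ℓ] s = s + w) (htw : F^[ℓ'] t = t + w') : ℓ' * w ≤ ℓ * w' := by
  by_contra! hlt
  have hgap : (1 : ℝ) ≤ ((ℓ' * w - ℓ * w' : ℤ) : ℝ) := by
    exact_mod_cast (by omega : 1 ≤ ℓ' * w - ℓ * w')
  obtain ⟨n, hn⟩ := exists_nat_gt (t + ⌈s - t⌉ - s)
  have hle : F^[n * ℓ' * ℓ] s ≤ F^[n * ℓ * ℓ'] (t + ⌈s - t⌉) := by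
    rw [mul_right_comm n ℓ' ℓ]
    exact hmono.iterate hmaps _ hs (hS t ht _) (by linarith [Int.le_ceil (s - t)])
  rw [iterate_mul_eq_add_mul hF hsw, iterate_add_intCast hF, iterate_mul_eq_add_mul hF htw] at hle
  push_cast at hle hgap
  nlinarith

lemma iterate_eq_add_of_iterate_eq_add (hF : ∀ t (m : ℤ), F (t + m) = F t + m)
    (hS : ∀ t ∈ S, ∀ m : ℤ, t + m ∈ S) (hmaps : MapsTo F S S) (hmono : MonotoneOn F S)
    {s t : ℝ} (hs : s ∈ S) (ht : t ∈ S) {ℓ ℓ' : ℕ} {w w' : ℤ} (hℓ' : 0 < ℓ')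
    (hsw : F^[ℓ] s = s + w) (htw : F^[ℓ'] t = t + w') : F^[ℓ] t = t + w := by
  set T : ℝ → ℝ := fun u => F^[ℓ] u + ((-w : ℤ) : ℝ)
  have hTmaps : MapsTo T S S := fun u hu => hS _ (hmaps.iterate ℓ hu) _
  have hTmono : MonotoneOn T S := fun u hu v hv huv =>
    (add_le_add_iff_right _).2 (hmono.iterate hmaps ℓ hu hv huv)
  have hTiter : ∀ n u, T^[n] u = F^[n * ℓ] u + ((-(n * w) : ℤ) : ℝ) := by
    intro n u
    induction n with
    | zero => simp
    | succ n ih =>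
      rw [iterate_succ_apply', ih]
      simp only [T]
      rw [iterate_add_intCast hF, Nat.succ_mul, add_comm _ ℓ, iterate_add_apply]
      push_cast
      ring
  have hrot : ℓ' * w = ℓ * w' := le_antisymm
    (mul_le_mul_of_iterate_eq_add hF hS hmaps hmono hs ht hsw htw)
    (mul_le_mul_of_iterate_eq_add hF hS hmaps hmono ht hs htw hsw)
  have hper : IsPeriodicPt T ℓ' t := by
    rw [IsPeriodicPt, IsFixedPt, hTiter, mul_comm, iterate_mul_eq_add_mul hF htw, mul_comm, hrot]
    push_cast
    ring
  have hfix : T t = t := hTmono.isFixedPt_of_isPeriodicPt hTmaps ht hℓ' hper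
  simp only [T] at hfix
  push_cast at hfix
  linarith

end DegreeOneLift

lemma cdist_nonneg (x y : AddCircle (1:ℝ)) : 0 ≤ cdist x y :=
  ((AddCircle.equivIco 1 0) (y - x)).2.1

lemma cdist_lt_one (x y : AddCircle (1:ℝ)) : cdist x y < 1 :=
  ((AddCircle.equivIco 1 0) (y - x)).2.2.trans_eq (zero_add 1)

lemma coe_cdist (x y : AddCircle (1:ℝ)) : (cdist x y : AddCircle (1:ℝ)) = y - x :=
  (AddCircle.equivIco 1 0).symm_apply_apply (y - x)

lemma cdist_coe_coe {a b : ℝ} (hab : a ≤ b) (hba : b < a + 1) :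
    cdist (a : AddCircle (1:ℝ)) b = b - a := by
  unfold cdist
  rw [← AddCircle.coe_sub, AddCircle.equivIco_coe_eq ⟨by linarith, by linarith⟩]

lemma coe_add_intCast (t : ℝ) (m : ℤ) : ((t + m : ℝ) : AddCircle (1:ℝ)) = t := by
  rw [AddCircle.coe_add, add_eq_left, AddCircle.coe_eq_zero_iff]
  exact ⟨m, by simp⟩

def circleLift (f : AddCircle (1:ℝ) → AddCircle (1:ℝ)) (t : ℝ) : ℝ :=
  t + cdist t (f t)

variable {f : AddCircle (1:ℝ) → AddCircle (1:ℝ)}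

lemma coe_circleLift (t : ℝ) : (circleLift f t : AddCircle (1:ℝ)) = f t := by
  rw [circleLift, AddCircle.coe_add, coe_cdist, add_sub_cancel]

lemma coe_iterate_circleLift (n : ℕ) (t : ℝ) :
    ((circleLift f)^[n] t : AddCircle (1:ℝ)) = f^[n] t := by
  induction n with
  | zero => rfl
  | succ n ih => rw [iterate_succ_apply', iterate_succ_apply', coe_circleLift, ih]

lemma circleLift_add_intCast (t : ℝ) (m : ℤ) : circleLift f (t + m) = circleLift f t + m := by
  rw [circleLift, circleLift, coe_add_intCast]
  ring

lemma iterate_circleLift_sub (n : ℕ) (t : ℝ) : (circleLift f)^[n] t - t = winding f t n := by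
  induction n with
  | zero => simp [winding]
  | succ n ih =>
    rw [winding, Finset.sum_range_succ, ← winding, ← ih, iterate_succ_apply', iterate_succ_apply',
      circleLift, coe_iterate_circleLift]
    ring

lemma isPeriodicPt_coe_iff_exists_iterate_circleLift {n : ℕ} {t : ℝ} :
    IsPeriodicPt f n t ↔ ∃ w : ℤ, (circleLift f)^[n] t = t + w := by
  rw [IsPeriodicPt, IsFixedPt, ← coe_iterate_circleLift, ← sub_eq_zero, ← AddCircle.coe_sub,
    AddCircle.coe_eq_zero_iff]
  refine exists_congr fun w => ?_
  rw [zsmul_one, eq_sub_iff_add_eq', eq_comm]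

variable {X : Finset (AddCircle (1:ℝ))} {r : ℝ}

lemma IsCyclicMap.mapsTo_circleLift (hf : IsCyclicMap X r f) :
    MapsTo (circleLift f) {t : ℝ | (t : AddCircle (1:ℝ)) ∈ X} {t | (t : AddCircle (1:ℝ)) ∈ X} :=
  fun t ht => show _ ∈ X from (coe_circleLift (f := f) t).symm ▸ (hf _ ht).1

/-- If `t` lies on the arc from `s` to `f s`, then `f s` lies on the arc from `t` to `f t`,
because `f t` is the furthest point of `X` within distance `r` of `t`. -/
lemma IsCyclicMap.monotoneOn_circleLift (hf : IsCyclicMap X r f) :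
    MonotoneOn (circleLift f) {t : ℝ | (t : AddCircle (1:ℝ)) ∈ X} := by
  intro s hs t ht hst
  obtain ⟨hfs, hsr, -⟩ := hf _ hs
  obtain ⟨-, -, hmax⟩ := hf _ ht
  have hFs : circleLift f s - s = cdist s (f s) := add_sub_cancel_left _ _
  have hFt : circleLift f t - t = cdist t (f t) := add_sub_cancel_left _ _
  have := cdist_nonneg t (f t)
  rcases le_or_gt (circleLift f s) t with hst' | hts
  · linarith
  have hdist : cdist (t : AddCircle (1:ℝ)) (f s) = circleLift f s - t := by
    rw [← coe_circleLift (f := f) s, cdist_coe_coe hts.le (by linarith [cdist_lt_one s (f s)])]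
  linarith [hmax (f s) hfs (by linarith)]

theorem periodic_orbits_same_length_and_winding_general
    (X : Finset (AddCircle (1:ℝ))) (r : ℝ)
    (f : AddCircle (1:ℝ) → AddCircle (1:ℝ)) (hf : IsCyclicMap X r f)
    (x y : AddCircle (1:ℝ)) (hx : x ∈ X) (hy : y ∈ X)
    (hxper : ∃ i, 1 ≤ i ∧ f^[i] x = x) (hyper : ∃ i, 1 ≤ i ∧ f^[i] y = y) :
    Function.minimalPeriod f x = Function.minimalPeriod f y ∧
      winding f x (Function.minimalPeriod f x) = winding f y (Function.minimalPeriod f y) := by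
  obtain ⟨s, rfl⟩ := QuotientAddGroup.mk_surjective x
  obtain ⟨t, rfl⟩ := QuotientAddGroup.mk_surjective y
  set S := {u : ℝ | (u : AddCircle (1:ℝ)) ∈ X}
  have hS : ∀ u ∈ S, ∀ m : ℤ, u + m ∈ S := fun u hu m => show _ ∈ X by rwa [coe_add_intCast]
  have transfer := @iterate_eq_add_of_iterate_eq_add _ _ circleLift_add_intCast hS
    hf.mapsTo_circleLift hf.monotoneOn_circleLift
  have hpos : 0 < minimalPeriod f s := minimalPeriod_pos_of_mem_periodicPts hxper
  have hpos' : 0 < minimalPeriod f t := minimalPeriod_pos_of_mem_periodicPts hyper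
  obtain ⟨w, hw⟩ := isPeriodicPt_coe_iff_exists_iterate_circleLift.1
    (isPeriodicPt_minimalPeriod f (s : AddCircle (1:ℝ)))
  obtain ⟨w', hw'⟩ := isPeriodicPt_coe_iff_exists_iterate_circleLift.1
    (isPeriodicPt_minimalPeriod f (t : AddCircle (1:ℝ)))
  have hts := transfer hx hy hpos' hw hw'
  have hst := transfer hy hx hpos hw' hw
  have hℓ : minimalPeriod f s = minimalPeriod f t := le_antisymm
    ((isPeriodicPt_coe_iff_exists_iterate_circleLift.2 ⟨w', hst⟩).minimalPeriod_le hpos')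
    ((isPeriodicPt_coe_iff_exists_iterate_circleLift.2 ⟨w, hts⟩).minimalPeriod_le hpos)
  refine ⟨hℓ, ?_⟩
  rw [← iterate_circleLift_sub, ← iterate_circleLift_sub, ← hℓ, hw, hts]
  ring

/-- All periodic orbits of `f_r : X → X` have the same length and the same winding number. -/
theorem periodic_orbits_same_length_and_winding
    (X : Finset (AddCircle (1:ℝ))) (r : ℝ) (hr0 : 0 < r) (hr1 : r ≤ 1)
    (f : AddCircle (1:ℝ) → AddCircle (1:ℝ)) (hf : IsCyclicMap X r f)
    (x y : AddCircle (1:ℝ)) (hx : x ∈ X) (hy : y ∈ X)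
    (hxper : ∃ i, 1 ≤ i ∧ f^[i] x = x) (hyper : ∃ i, 1 ≤ i ∧ f^[i] y = y) :
    Function.minimalPeriod f x = Function.minimalPeriod f y ∧
      winding f x (Function.minimalPeriod f x) = winding f y (Function.minimalPeriod f y) :=
  periodic_orbits_same_length_and_winding_general X r f hf x y hx hy hxper hyper
end
end

section
/- For integers k > m ≥ 1, the iterated integral ∫_{0 ≤ t_1 ≤ t_2 ≤ ⋯ ≤ t_k} e^{−t_m − t_k} dt_1 ⋯ dt_k equals 1/2^m. -/
/-!
Substituting the gaps `sᵢ = tᵢ - tᵢ₋₁` (with `t₀ = 0`) is a unimodular linear change of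
variables: `t` is the vector of partial sums of `s`, and the region `0 ≤ t₁ ≤ ⋯ ≤ t_k` becomes the
orthant `s ≥ 0`. There `t_m + t_k = 2 (s₁ + ⋯ + s_m) + s_{m+1} + ⋯ + s_k`, so the integrand
factors and the integral is `∏ 1 / wᵢ = 2⁻ᵐ` with weights `wᵢ ∈ {2, 1}`.
-/
open MeasureTheory Finset

section PartialSums

variable {ι : Type*} [Fintype ι] [LinearOrder ι]

variable (ι) in
noncomputable def partialSumMatrix : Matrix ι ι ℝ :=
  Matrix.of fun i j => if j ≤ i then 1 else 0

theorem det_partialSumMatrix : (partialSumMatrix ι).det = 1 := by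
  rw [Matrix.det_of_isLowerTriangular]
  · simp [partialSumMatrix]
  · intro i j hij
    simp [partialSumMatrix, not_le.2 (OrderDual.toDual_lt_toDual.1 hij)]

noncomputable def partialSums : (ι → ℝ) →ₗ[ℝ] (ι → ℝ) :=
  Matrix.toLin' (partialSumMatrix ι)

theorem partialSums_apply [LocallyFiniteOrderBot ι] (s : ι → ℝ) (j : ι) :
    partialSums s j = ∑ i ∈ Iic j, s i := by
  simp [partialSums, Matrix.toLin'_apply, Matrix.mulVec, dotProduct, partialSumMatrix,
    ← sum_filter, filter_ge_eq_Iic]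

theorem measurePreserving_partialSums : MeasurePreserving (partialSums (ι := ι)) := by
  refine ⟨(partialSums (ι := ι)).continuous_of_finiteDimensional.measurable, ?_⟩
  rw [Real.map_linearMap_volume_pi_eq_smul_volume_pi] <;>
    simp [partialSums, LinearMap.det_toLin', det_partialSumMatrix]

theorem measurableEmbedding_partialSums : MeasurableEmbedding (partialSums (ι := ι)) := by
  have : Function.Injective (partialSums (ι := ι)) :=
    Matrix.mulVec_injective_of_isUnit <|
      (Matrix.isUnit_iff_isUnit_det _).2 (by simp [det_partialSumMatrix])
  exact (LinearMap.isClosedEmbedding_of_injective (LinearMap.ker_eq_bot.2 this)).measurableEmbedding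

end PartialSums

section Fin

variable {n : ℕ}

theorem partialSums_zero (s : Fin (n + 1) → ℝ) : partialSums s 0 = s 0 := by
  rw [partialSums_apply, ← bot_eq_zero, Iic_bot, sum_singleton]

theorem partialSums_succ (s : Fin (n + 1) → ℝ) (i : Fin n) :
    partialSums s i.succ = partialSums s i.castSucc + s i.succ := by
  rw [partialSums_apply, partialSums_apply, ← Iio_insert, sum_insert notMem_Iio_self, add_comm]
  congr 2

theorem nonneg_zero_and_monotone_partialSums_iff (s : Fin (n + 1) → ℝ) :
    (0 ≤ partialSums s 0 ∧ Monotone (partialSums s)) ↔ ∀ i, 0 ≤ s i := by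
  simp [Fin.monotone_iff_le_succ, Fin.forall_fin_succ, partialSums_zero, partialSums_succ]

theorem setIntegral_monotone_eq_setIntegral_partialSums (f : (Fin (n + 1) → ℝ) → ℝ) :
    ∫ t in {t | 0 ≤ t 0 ∧ Monotone t}, f t =
      ∫ s in Set.univ.pi fun _ => Set.Ici 0, f (partialSums s) := by
  rw [← measurePreserving_partialSums.setIntegral_preimage_emb measurableEmbedding_partialSums]
  congr 2
  ext s
  simpa [Pi.le_def] using nonneg_zero_and_monotone_partialSums_iff s

end Fin

theorem integral_Ici_exp_neg_mul {a : ℝ} (ha : 0 < a) :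
    ∫ x in Set.Ici (0 : ℝ), Real.exp (-(a * x)) = a⁻¹ := by
  rw [integral_Ici_eq_integral_Ioi]
  simpa [neg_mul, ← neg_inv] using integral_exp_mul_Ioi (neg_neg_of_pos ha) 0

theorem setIntegral_orthant_exp_neg_sum_mul {ι : Type*} [Fintype ι] (w : ι → ℝ)
    (hw : ∀ i, 0 < w i) :
    ∫ s in Set.univ.pi fun _ : ι => Set.Ici 0, Real.exp (-∑ i, w i * s i) = ∏ i, (w i)⁻¹ := by
  rw [volume_pi, Measure.restrict_pi_pi]
  simp_rw [← sum_neg_distrib, Real.exp_sum]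
  rw [integral_fintype_prod_eq_prod fun i x => Real.exp (-(w i * x))]
  exact prod_congr rfl fun i _ => integral_Ici_exp_neg_mul (hw i)

/-- For integers `k > m ≥ 1`, the iterated integral
`∫_{0 ≤ t₁ ≤ ⋯ ≤ t_k} e^{−t_m − t_k} dt₁ ⋯ dt_k = 1/2^m`. -/
theorem ordered_simplex_exponential_integral (k m : ℕ) (hm : 1 ≤ m) (hk : m < k) :
    ∫ t in {t : Fin k → ℝ | 0 ≤ t ⟨0, by omega⟩ ∧ Monotone t},
        Real.exp (-(t ⟨m - 1, by omega⟩) - t ⟨k - 1, by omega⟩)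
      ∂(volume : Measure (Fin k → ℝ)) = 1 / 2 ^ m := by
  obtain ⟨n, rfl⟩ : ∃ n, k = n + 1 := ⟨k - 1, by omega⟩
  let w : Fin (n + 1) → ℝ := fun i => if (i : ℕ) < m then 2 else 1
  have hsum (s : Fin (n + 1) → ℝ) :
      partialSums s ⟨m - 1, by omega⟩ + partialSums s (Fin.last n) = ∑ i, w i * s i := by
    rw [partialSums_apply, partialSums_apply, ← Fin.top_eq_last, Iic_top, ← filter_ge_eq_Iic,
      sum_filter, ← sum_add_distrib]
    refine sum_congr rfl fun i _ => ?_
    simp only [w, Fin.le_def]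
    split_ifs <;> first | omega | ring
  have hprod : ∏ i, (w i)⁻¹ = 1 / 2 ^ m := by
    simp only [w, apply_ite Inv.inv, inv_one, prod_ite, prod_const_one, mul_one, prod_const,
      Fin.card_filter_val_lt, min_eq_right hk.le, one_div, inv_pow]
  calc _ = ∫ s in Set.univ.pi fun _ => Set.Ici 0, Real.exp (-∑ i, w i * s i) := by
        simp_rw [← hsum, neg_add']
        exact setIntegral_monotone_eq_setIntegral_partialSums _
    _ = 1 / 2 ^ m := by
      rw [setIntegral_orthant_exp_neg_sum_mul w fun i => by positivity, hprod]
end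

section
/- Fix q ≥ 2 and i ≥ 0. Let K_i(q) ⊆ ℝ_+^{2i+2} be the cone of u = (z_1, …, z_{i+1}, w_1, …, w_{i+1}) with nonnegative coordinates satisfying: z_1+⋯+z_j ≥ w_1+⋯+w_j for 1 ≤ j ≤ i; z_1+⋯+z_{i+1} < w_1+⋯+w_{i+1}; and z_1+⋯+z_j < w_1+⋯+w_{j+q−2} for 1 ≤ j ≤ i−q+2. Then ∫_{K_i(q)} e^{−‖u‖_1} du = C_{i,q−2} / 2^{2i+1}, where C_{i,h} is the number of Dyck paths of order i with all heights at most h. -/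
open MeasureTheory

/-- Partial sum of the first `j` coordinates of a vector. -/
def psum {n : ℕ} (v : Fin n → ℝ) (j : ℕ) : ℝ :=
  ∑ t ∈ Finset.range j, if h : t < n then v ⟨t, h⟩ else 0

/-- The height of the lattice path encoded by `s` (true = up-step `(1,1)`,
false = down-step `(1,−1)`) after `j` steps. -/
def pathHeight {n : ℕ} (s : Fin n → Bool) (j : ℕ) : ℤ :=
  ∑ t ∈ Finset.range j, if h : t < n then (if s ⟨t, h⟩ then 1 else -1) else 0

/-- `C_{i,h}`: the number of Dyck paths of order `i` (from `(0,0)` to `(2i,0)`)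
whose height stays in `[0, h]`. -/
noncomputable def boundedDyck (i h : ℕ) : ℕ :=
  Nat.card {s : Fin (2*i) → Bool //
    (∀ j ≤ 2*i, 0 ≤ pathHeight s j ∧ pathHeight s j ≤ (h : ℤ)) ∧
    pathHeight s (2*i) = 0}

/-- The cone `K_i(q)` defined by `H(1,1), …, H(i,i)`, `¬H(i+1,i+1)`, and
`¬H(1,q−1), …, ¬H(i−q+2,i)`. -/
def KconeQ (i q : ℕ) : Set ((Fin (i+1) → ℝ) × (Fin (i+1) → ℝ)) :=
  {u | (∀ j, 0 ≤ u.1 j) ∧ (∀ j, 0 ≤ u.2 j) ∧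
    (∀ j, 1 ≤ j → j ≤ i → psum u.2 j ≤ psum u.1 j) ∧
    psum u.1 (i+1) < psum u.2 (i+1) ∧
    (∀ j, 1 ≤ j → j + q ≤ i + 2 → psum u.1 j < psum u.2 (j + q - 2))}

/-!
Write `Z_j = z_1 + ⋯ + z_j` and `W_j = w_1 + ⋯ + w_j` for `u = (z, w)`. Off a null set all
coordinates are positive and the `2i + 2` numbers `Z_j`, `W_j` are distinct, so listing them in
increasing order gives a shuffle `s` of the chains `Z_1 < ⋯ < Z_{i+1}` and `W_1 < ⋯ < W_{i+1}`
together with the positive gaps `g` between consecutive values. For fixed `s` the map `g ↦ u` is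
linear of determinant one, and whether `u` lies in `K_i(q)` depends on `s` only: reading `W` as an
up-step and `Z` as a down-step, the conditions `W_j ≤ Z_j` and `Z_j < W_{j+q-2}` say that the
first `2i` letters of `s` form a Dyck path of height at most `q - 2`, and `Z_{i+1} < W_{i+1}`
forces `s` to end with `Z W`. On each of these `C_{i,q-2}` pieces
`‖u‖₁ = Z_{i+1} + W_{i+1} = 2(g_1 + ⋯ + g_{2i+1}) + g_{2i+2}`, whose exponential integrates
to `2^{-(2i+1)}`.
-/

namespace DyckCone

open Finset

section PartialSums

variable {m : ℕ}

@[simp] lemma psum_zero (v : Fin m → ℝ) : psum v 0 = 0 := by simp [psum]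

lemma psum_succ (v : Fin m → ℝ) (j : ℕ) :
    psum v (j + 1) = psum v j + if h : j < m then v ⟨j, h⟩ else 0 :=
  sum_range_succ _ _

lemma sum_eq_psum (v : Fin m → ℝ) : ∑ k, v k = psum v m := by
  rw [psum, ← Fin.sum_univ_eq_sum_range (fun t => if h : t < m then v ⟨t, h⟩ else 0)]
  simp

lemma psum_add (u v : Fin m → ℝ) (j : ℕ) : psum (u + v) j = psum u j + psum v j := by
  simp only [psum, ← sum_add_distrib]
  refine sum_congr rfl fun t _ => ?_
  split_ifs <;> simp

lemma psum_smul (c : ℝ) (v : Fin m → ℝ) (j : ℕ) : psum (c • v) j = c * psum v j := by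
  simp only [psum, mul_sum]
  refine sum_congr rfl fun t _ => ?_
  split_ifs <;> simp

lemma psum_single (t : Fin m) (j : ℕ) :
    psum (Pi.single t 1) j = if (t : ℕ) < j then 1 else 0 := by
  have hterm : ∀ u : ℕ, (if h : u < m then (Pi.single t 1 : Fin m → ℝ) ⟨u, h⟩ else 0)
      = if (t : ℕ) = u then 1 else 0 := by
    intro u
    by_cases h : u < m
    · simp [h, Pi.single_apply, Fin.ext_iff, eq_comm]
    · rw [dif_neg h, if_neg (by omega)]
  simp only [psum, hterm, sum_ite_eq, mem_range]

lemma monotone_psum {v : Fin m → ℝ} (hv : ∀ k, 0 ≤ v k) : Monotone (psum v) :=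
  monotone_nat_of_le_succ fun j => by
    rw [psum_succ]
    split_ifs <;> simp [hv]

lemma psum_strictMonoOn {v : Fin m → ℝ} (hv : ∀ k, 0 < v k) :
    StrictMonoOn (psum v) (Set.Iic m) := by
  refine strictMonoOn_Iic_of_lt_succ fun j hj => ?_
  rw [Order.succ_eq_add_one, psum_succ, dif_pos (by omega)]
  linarith [hv ⟨j, by omega⟩]

lemma psum_le_psum_iff {v : Fin m → ℝ} (hv : ∀ k, 0 < v k) {j j' : ℕ} (hj : j ≤ m)
    (hj' : j' ≤ m) : psum v j ≤ psum v j' ↔ j ≤ j' :=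
  (psum_strictMonoOn hv).le_iff_le hj hj'

lemma psum_lt_psum_iff {v : Fin m → ℝ} (hv : ∀ k, 0 < v k) {j j' : ℕ} (hj : j ≤ m)
    (hj' : j' ≤ m) : psum v j < psum v j' ↔ j < j' :=
  (psum_strictMonoOn hv).lt_iff_lt hj hj'

lemma psum_succ_pos {v : Fin m → ℝ} (hv : ∀ k, 0 < v k) (j : Fin m) : 0 < psum v (j + 1) := by
  simpa using (psum_lt_psum_iff hv (j := 0) (by omega) j.isLt).2 (by omega)

end PartialSums

section Cumsum

variable {m : ℕ}

def cumsumLinear (m : ℕ) : (Fin m → ℝ) →ₗ[ℝ] (Fin m → ℝ) where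
  toFun g k := psum g (k + 1)
  map_add' u v := funext fun _ => psum_add u v _
  map_smul' c v := funext fun _ => psum_smul c v _

@[simp] lemma cumsumLinear_apply (g : Fin m → ℝ) (k : Fin m) :
    cumsumLinear m g k = psum g (k + 1) := rfl

lemma det_cumsumLinear : LinearMap.det (cumsumLinear m) = 1 := by
  have hentry : ∀ k t : Fin m,
      LinearMap.toMatrix (Pi.basisFun ℝ (Fin m)) (Pi.basisFun ℝ (Fin m)) (cumsumLinear m) k t
        = if t ≤ k then 1 else 0 := by
    intro k t
    rw [LinearMap.toMatrix_apply, Pi.basisFun_apply, Pi.basisFun_repr]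
    change psum _ (k.val + 1) = _
    rw [psum_single]
    exact if_congr (by rw [Nat.lt_succ_iff, Fin.le_def]) rfl rfl
  rw [← LinearMap.det_toMatrix (Pi.basisFun ℝ (Fin m)),
    Matrix.det_of_isLowerTriangular _ fun k t hkt => by
      rw [hentry, if_neg (not_le.2 (OrderDual.toDual_lt_toDual.1 hkt))]]
  exact prod_eq_one fun k _ => by rw [hentry, if_pos le_rfl]

noncomputable def cumsum (m : ℕ) : (Fin m → ℝ) ≃ᵐ (Fin m → ℝ) :=
  ((cumsumLinear m).equivOfDetNeZero (by simp [det_cumsumLinear])).toContinuousLinearEquiv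
    |>.toHomeomorph.toMeasurableEquiv

@[simp] lemma cumsum_apply (g : Fin m → ℝ) (k : Fin m) : cumsum m g k = psum g (k + 1) := rfl

lemma measurePreserving_cumsum : MeasurePreserving (cumsum m) volume volume := by
  refine ⟨(cumsum m).measurable, ?_⟩
  change Measure.map (cumsumLinear m) volume = volume
  have := Real.map_linearMap_volume_pi_eq_smul_volume_pi
    (f := cumsumLinear m) (by simp [det_cumsumLinear])
  simpa [det_cumsumLinear] using this

lemma pos_iff_strictMono_cumsum (g : Fin m → ℝ) :
    (∀ k, 0 < g k) ↔ StrictMono (cumsum m g) ∧ ∀ k, 0 < cumsum m g k := by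
  refine ⟨fun hg => ⟨fun k k' hkk' => ?_, fun k => ?_⟩, fun ⟨hmono, hpos⟩ k => ?_⟩
  · exact (psum_lt_psum_iff hg (by omega) (by omega)).2 (by simpa using hkk')
  · exact psum_succ_pos hg k
  · have hk : psum g (k + 1) = psum g k + g k := by rw [psum_succ, dif_pos k.isLt]
    rcases Nat.eq_zero_or_pos (k : ℕ) with h0 | h0
    · have := hpos k
      rw [cumsum_apply, hk, h0, psum_zero, zero_add] at this
      exact this
    · have := hmono (show (⟨k - 1, by omega⟩ : Fin m) < k from Fin.lt_def.2 (by simp; omega))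
      simp only [cumsum_apply, Nat.sub_add_cancel h0] at this
      linarith

noncomputable def partialSums (a b : ℕ) :
    (Fin a → ℝ) × (Fin b → ℝ) ≃ᵐ (Fin a ⊕ Fin b → ℝ) :=
  (MeasurableEquiv.prodCongr (cumsum a) (cumsum b)).trans
    (MeasurableEquiv.sumPiEquivProdPi fun _ => ℝ).symm

variable {a b : ℕ} (x : (Fin a → ℝ) × (Fin b → ℝ))

@[simp] lemma partialSums_inl (j : Fin a) : partialSums a b x (.inl j) = psum x.1 (j + 1) := rfl

@[simp] lemma partialSums_inr (j : Fin b) : partialSums a b x (.inr j) = psum x.2 (j + 1) := rfl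

lemma measurePreserving_partialSums :
    MeasurePreserving (partialSums a b) volume volume := by
  refine ((volume_measurePreserving_sumPiEquivProdPi fun _ : Fin a ⊕ Fin b => ℝ).symm _).comp ?_
  rw [Measure.volume_eq_prod]
  exact measurePreserving_cumsum.prod measurePreserving_cumsum

end Cumsum

section Words

variable {N : ℕ} (s : Fin N → Bool) (c : Bool)

def letterCount (k : ℕ) : ℕ := #{t : Fin N | t.val < k ∧ s t = c}

@[simp] lemma letterCount_zero : letterCount s c 0 = 0 := by simp [letterCount]

lemma letterCount_succ (k : Fin N) :
    letterCount s c (k + 1) = letterCount s c k + if s k = c then 1 else 0 := by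
  have hterm (t : Fin N) : (if t.val < k + 1 ∧ s t = c then 1 else 0) =
      (if t.val < k ∧ s t = c then 1 else 0) +
        if t = k then (if s t = c then 1 else 0) else 0 := by
    by_cases htk : t = k
    · subst htk; simp
    · have : (t : ℕ) ≠ k := fun h => htk (Fin.ext h)
      rw [if_neg htk, add_zero]
      exact if_congr (and_congr_left' (by omega)) rfl rfl
  simp only [letterCount, card_filter, hterm, sum_add_distrib, sum_ite_eq', mem_univ, if_true]

lemma letterCount_mono : Monotone (letterCount s c) := fun _ _ h =>
  card_le_card fun t => by
    simp only [mem_filter, mem_univ, true_and]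
    exact fun ht => ⟨by omega, ht.2⟩

lemma letterCount_true_add_false {k : ℕ} (hk : k ≤ N) :
    letterCount s true k + letterCount s false k = k := by
  induction k with
  | zero => simp
  | succ k ih =>
    have ht := letterCount_succ s true ⟨k, by omega⟩
    have hf := letterCount_succ s false ⟨k, by omega⟩
    simp only at ht hf
    generalize s ⟨k, _⟩ = b at ht hf
    cases b <;> simp at ht hf <;> omega

lemma letterCount_not (k : ℕ) : letterCount (fun t => !s t) c k = letterCount s (!c) k := by
  simp only [letterCount, Bool.not_eq_eq_eq_not]

lemma letterCount_congr {N' : ℕ} {s' : Fin N' → Bool} {k : ℕ} (hk : k ≤ N) (hk' : k ≤ N')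
    (h : ∀ t (ht : t < k), s ⟨t, by omega⟩ = s' ⟨t, by omega⟩) :
    letterCount s c k = letterCount s' c k := by
  induction k with
  | zero => simp
  | succ k ih =>
    have e := letterCount_succ s c ⟨k, by omega⟩
    have e' := letterCount_succ s' c ⟨k, by omega⟩
    simp only at e e'
    rw [e, e', ih (by omega) (by omega) (fun t ht => h t (by omega)), h k (by omega)]

def hitTime (j : ℕ) : ℕ :=
  Nat.find (⟨N, .inl le_rfl⟩ : ∃ m, N ≤ m ∨ j ≤ letterCount s c m)

lemma hitTime_le (j : ℕ) : hitTime s c j ≤ N := Nat.find_min' _ (.inl le_rfl)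

@[simp] lemma hitTime_zero : hitTime s c 0 = 0 :=
  (Nat.find_eq_zero _).2 (.inr (Nat.zero_le _))

lemma hitTime_mono : Monotone (hitTime s c) := fun _ _ h =>
  Nat.find_mono fun _ hm => hm.imp_right h.trans

lemma lt_hitTime_iff {j : ℕ} (k : Fin N) : k < hitTime s c j ↔ letterCount s c k < j := by
  rw [hitTime, Nat.lt_find_iff]
  refine ⟨fun h => by simpa [k.isLt] using h k le_rfl, fun h m hm => ?_⟩
  have := letterCount_mono s c hm
  simp only [not_or, not_le]
  omega

variable {s c}

lemma letterCount_succ_of_eq {k : Fin N} (h : s k = c) :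
    letterCount s c (k + 1) = letterCount s c k + 1 := by
  simp [letterCount_succ, h]

lemma letterCount_succ_of_ne {k : Fin N} (h : s k ≠ c) :
    letterCount s c (k + 1) = letterCount s c k := by
  simp [letterCount_succ, h]

lemma letterCount_lt_of_lt {k : Fin N} (h : s k = c) {k' : ℕ} (hk : k < k') :
    letterCount s c k < letterCount s c k' :=
  calc letterCount s c k < letterCount s c (k + 1) := by rw [letterCount_succ_of_eq h]; omega
    _ ≤ letterCount s c k' := letterCount_mono s c hk

lemma letterCount_lt_letterCount {k : Fin N} (h : s k = c) :
    letterCount s c k < letterCount s c N :=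
  letterCount_lt_of_lt h k.isLt

lemma eq_of_letterCount_eq {k k' : Fin N} (h : s k = c) (h' : s k' = c)
    (hkk' : letterCount s c k = letterCount s c k') : k = k' := by
  rcases lt_trichotomy k k' with hlt | heq | hlt
  · exact absurd hkk' (letterCount_lt_of_lt h hlt).ne
  · exact heq
  · exact absurd hkk' (letterCount_lt_of_lt h' hlt).ne'

lemma hitTime_le_hitTime_iff {c' : Bool} {j j' : ℕ} :
    hitTime s c j ≤ hitTime s c' j' ↔
      ∀ k : Fin N, letterCount s c k < j → letterCount s c' k < j' := by
  refine ⟨fun h k hk => (lt_hitTime_iff s c' k).1 ((lt_hitTime_iff s c k).2 hk |>.trans_le h),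
    fun h => ?_⟩
  by_contra! hlt
  let k : Fin N := ⟨hitTime s c' j', hlt.trans_le (hitTime_le s c j)⟩
  exact (lt_irrefl k.val) ((lt_hitTime_iff s c' k).2 (h k ((lt_hitTime_iff s c k).1 hlt)))

lemma hitTime_eq_succ {k : Fin N} {j : ℕ} (hk : s k = c) (hj : letterCount s c (k + 1) = j) :
    hitTime s c j = k + 1 := by
  refine le_antisymm (Nat.find_min' _ (.inr hj.ge)) ?_
  rw [Nat.succ_le_iff, lt_hitTime_iff, ← hj, letterCount_succ_of_eq hk]
  omega

lemma exists_hitTime_eq_succ {j : ℕ} (hj : 0 < j) (hjN : j ≤ letterCount s c N) :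
    ∃ k : Fin N, s k = c ∧ letterCount s c k + 1 = j ∧ hitTime s c j = k + 1 := by
  have hpos : 0 < hitTime s c j := by
    rcases Nat.eq_zero_or_pos N with hN | hN
    · subst hN; simp [letterCount] at hjN; omega
    · simpa using (lt_hitTime_iff s c ⟨0, hN⟩).2 (by simpa using hj)
  let k : Fin N := ⟨hitTime s c j - 1, by have := hitTime_le s c j; omega⟩
  have hk : (k : ℕ) + 1 = hitTime s c j := by simp [k]; omega
  have hlt : letterCount s c k < j := (lt_hitTime_iff s c k).1 (by omega)
  have hreach : j ≤ letterCount s c (k + 1) := by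
    rw [hk]
    rcases Nat.find_spec (⟨N, .inl le_rfl⟩ : ∃ m, N ≤ m ∨ j ≤ letterCount s c m) with
      hN | hN
    · rwa [show hitTime s c j = N from le_antisymm (hitTime_le s c j) hN]
    · exact hN
  have hsk : s k = c := by
    by_contra hne
    rw [letterCount_succ_of_ne hne] at hreach
    omega
  rw [letterCount_succ_of_eq hsk] at hreach
  have hkj : letterCount s c k + 1 = j := by omega
  exact ⟨k, hsk, hkj, hitTime_eq_succ hsk (by rw [letterCount_succ_of_eq hsk, hkj])⟩

lemma hitTime_ne {c' : Bool} (hc : c ≠ c') {j j' : ℕ} (hj : 0 < j)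
    (hjN : j ≤ letterCount s c N) (hj' : 0 < j') (hjN' : j' ≤ letterCount s c' N) :
    hitTime s c j ≠ hitTime s c' j' := by
  obtain ⟨k, hk, -, hkj⟩ := exists_hitTime_eq_succ hj hjN
  obtain ⟨k', hk', -, hkj'⟩ := exists_hitTime_eq_succ hj' hjN'
  intro h
  rw [hkj, hkj', add_left_inj, ← Fin.ext_iff] at h
  exact hc (hk ▸ h ▸ hk')

end Words

section Shuffle

variable {N a b : ℕ}

noncomputable def blockIndex (s : Fin N → Bool) (ha : letterCount s true N = a)
    (hb : letterCount s false N = b) : Fin N ≃ Fin a ⊕ Fin b :=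
  Equiv.ofBijective
    (fun k => if h : s k = true
      then .inl ⟨letterCount s true k, ha ▸ letterCount_lt_letterCount h⟩
      else .inr ⟨letterCount s false k,
        hb ▸ letterCount_lt_letterCount (Bool.eq_false_iff.2 h)⟩) <| by
    refine (Fintype.bijective_iff_injective_and_card _).2 ⟨fun k k' hkk' => ?_, ?_⟩
    · by_cases hk : s k = true <;> by_cases hk' : s k' = true <;>
        simp only [hk, hk', dite_true, dite_false, Sum.inl.injEq, Sum.inr.injEq, Fin.mk.injEq,
          reduceCtorEq] at hkk'
      · exact eq_of_letterCount_eq hk hk' hkk'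
      · exact eq_of_letterCount_eq (by simpa using hk) (by simpa using hk') hkk'
    · simp [← ha, ← hb, letterCount_true_add_false]

variable {s : Fin N → Bool} {ha : letterCount s true N = a} {hb : letterCount s false N = b}

lemma blockIndex_eq_inl_iff {k : Fin N} {j : Fin a} :
    blockIndex s ha hb k = .inl j ↔ s k = true ∧ letterCount s true k = j := by
  by_cases hk : s k = true <;> simp [blockIndex, hk, Fin.ext_iff]

lemma blockIndex_eq_inr_iff {k : Fin N} {j : Fin b} :
    blockIndex s ha hb k = .inr j ↔ s k = false ∧ letterCount s false k = j := by
  by_cases hk : s k = true <;> simp [blockIndex, hk, Fin.ext_iff]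

lemma isLeft_blockIndex (k : Fin N) : (blockIndex s ha hb k).isLeft = s k := by
  by_cases hk : s k = true <;> simp [blockIndex, hk]

lemma hitTime_true_succ (j : Fin a) :
    hitTime s true (j + 1) = (blockIndex s ha hb).symm (.inl j) + 1 := by
  obtain ⟨hk, hcount⟩ :=
    blockIndex_eq_inl_iff.1 ((blockIndex s ha hb).apply_symm_apply (.inl j))
  exact hitTime_eq_succ hk (by rw [letterCount_succ_of_eq hk, hcount])

lemma hitTime_false_succ (j : Fin b) :
    hitTime s false (j + 1) = (blockIndex s ha hb).symm (.inr j) + 1 := by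
  obtain ⟨hk, hcount⟩ :=
    blockIndex_eq_inr_iff.1 ((blockIndex s ha hb).apply_symm_apply (.inr j))
  exact hitTime_eq_succ hk (by rw [letterCount_succ_of_eq hk, hcount])

lemma letterCount_isLeft_true (e : Fin N ≃ Fin a ⊕ Fin b) (k : ℕ) :
    letterCount (fun t => (e t).isLeft) true k = #{j : Fin a | (e.symm (.inl j) : ℕ) < k} := by
  refine (card_bij (fun j _ => e.symm (.inl j)) (fun j hj => ?_) (fun j _ j' _ h => ?_)
    (fun t ht => ?_)).symm
  · simpa using hj
  · simpa using h
  · simp only [mem_filter, mem_univ, true_and, Sum.isLeft_iff] at ht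
    obtain ⟨hk, j, hj⟩ := ht
    exact ⟨j, by simpa [← hj] using hk, by simp [← hj]⟩

lemma letterCount_isLeft_false (e : Fin N ≃ Fin a ⊕ Fin b) (k : ℕ) :
    letterCount (fun t => (e t).isLeft) false k = #{j : Fin b | (e.symm (.inr j) : ℕ) < k} := by
  refine (card_bij (fun j _ => e.symm (.inr j)) (fun j hj => ?_) (fun j _ j' _ h => ?_)
    (fun t ht => ?_)).symm
  · simpa using hj
  · simpa using h
  · simp only [mem_filter, mem_univ, true_and, Sum.isLeft_eq_false, Sum.isRight_iff] at ht
    obtain ⟨hk, j, hj⟩ := ht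
    exact ⟨j, by simpa [← hj] using hk, by simp [← hj]⟩

lemma exists_blockIndex_eq (e : Fin N ≃ Fin a ⊕ Fin b)
    (hl : StrictMono fun j => e.symm (.inl j)) (hr : StrictMono fun j => e.symm (.inr j)) :
    ∃ ha hb, blockIndex (fun k => (e k).isLeft) ha hb = e := by
  refine ⟨by simp [letterCount_isLeft_true], by simp [letterCount_isLeft_false],
    Equiv.ext fun k => ?_⟩
  rcases hk : e k with j | j
  · refine blockIndex_eq_inl_iff.2 ⟨by simp [hk], ?_⟩
    rw [letterCount_isLeft_true, ← e.symm_apply_eq.2 hk.symm]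
    simp_rw [← Fin.lt_def, hl.lt_iff_lt, filter_gt_eq_Iio, Fin.card_Iio]
  · refine blockIndex_eq_inr_iff.2 ⟨by simp [hk], ?_⟩
    rw [letterCount_isLeft_false, ← e.symm_apply_eq.2 hk.symm]
    simp_rw [← Fin.lt_def, hr.lt_iff_lt, filter_gt_eq_Iio, Fin.card_Iio]

variable (s ha hb)

/-- The point `(z, w)` whose partial sums, listed in the order prescribed by the shuffle `s`
(a letter `true` for the next `z`-sum, `false` for the next `w`-sum), are the cumulative sums of
the gaps `g`. -/
noncomputable def shuffleEquiv : (Fin N → ℝ) ≃ᵐ (Fin a → ℝ) × (Fin b → ℝ) :=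
  (cumsum N).trans <|
    (MeasurableEquiv.piCongrLeft (fun _ => ℝ) (blockIndex s ha hb)).trans (partialSums a b).symm

def shuffleRegion : Set ((Fin a → ℝ) × (Fin b → ℝ)) :=
  shuffleEquiv s ha hb '' Set.univ.pi fun _ => Set.Ioi 0

lemma measurePreserving_shuffleEquiv : MeasurePreserving (shuffleEquiv s ha hb) volume volume :=
  (measurePreserving_partialSums.symm _).comp <|
    (volume_measurePreserving_piCongrLeft _ _).comp measurePreserving_cumsum

lemma measurableSet_shuffleRegion : MeasurableSet (shuffleRegion s ha hb) :=
  (shuffleEquiv s ha hb).measurableSet_image.2 (.univ_pi fun _ => measurableSet_Ioi)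

variable {s ha hb}

lemma partialSums_shuffleEquiv (g : Fin N → ℝ) (k : Fin N) :
    partialSums a b (shuffleEquiv s ha hb g) (blockIndex s ha hb k) = psum g (k + 1) := by
  simp [shuffleEquiv, MeasurableEquiv.coe_piCongrLeft, Equiv.piCongrLeft_apply_apply]

lemma psum_shuffleEquiv_fst (g : Fin N → ℝ) {j : ℕ} (hj : j ≤ a) :
    psum (shuffleEquiv s ha hb g).1 j = psum g (hitTime s true j) := by
  cases j with
  | zero => simp
  | succ j =>
    have := partialSums_shuffleEquiv (ha := ha) (hb := hb) g
      ((blockIndex s ha hb).symm (.inl ⟨j, hj⟩))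
    rw [Equiv.apply_symm_apply, partialSums_inl] at this
    rw [this, hitTime_true_succ ⟨j, hj⟩ (ha := ha) (hb := hb)]

lemma psum_shuffleEquiv_snd (g : Fin N → ℝ) {j : ℕ} (hj : j ≤ b) :
    psum (shuffleEquiv s ha hb g).2 j = psum g (hitTime s false j) := by
  cases j with
  | zero => simp
  | succ j =>
    have := partialSums_shuffleEquiv (ha := ha) (hb := hb) g
      ((blockIndex s ha hb).symm (.inr ⟨j, hj⟩))
    rw [Equiv.apply_symm_apply, partialSums_inr] at this
    rw [this, hitTime_false_succ ⟨j, hj⟩ (ha := ha) (hb := hb)]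

lemma mem_shuffleRegion_iff {x : (Fin a → ℝ) × (Fin b → ℝ)} :
    x ∈ shuffleRegion s ha hb ↔
      StrictMono (partialSums a b x ∘ blockIndex s ha hb) ∧ ∀ m, 0 < partialSums a b x m := by
  obtain ⟨g, rfl⟩ := (shuffleEquiv s ha hb).surjective x
  have hcomp : partialSums a b (shuffleEquiv s ha hb g) ∘ blockIndex s ha hb = cumsum N g :=
    funext (partialSums_shuffleEquiv g)
  rw [shuffleRegion, (shuffleEquiv s ha hb).injective.mem_set_image, Set.mem_univ_pi,
    ← (blockIndex s ha hb).forall_congr_right]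
  simp only [Set.mem_Ioi]
  rw [pos_iff_strictMono_cumsum, ← hcomp]
  rfl

lemma eq_of_mem_shuffleRegion {s' : Fin N → Bool} {ha' : letterCount s' true N = a}
    {hb' : letterCount s' false N = b} {x : (Fin a → ℝ) × (Fin b → ℝ)}
    (hx : x ∈ shuffleRegion s ha hb) (hx' : x ∈ shuffleRegion s' ha' hb') : s = s' := by
  set f := partialSums a b x
  have hmono := (mem_shuffleRegion_iff.1 hx).1
  have hmono' := (mem_shuffleRegion_iff.1 hx').1
  -- two strictly monotone enumerations of the finite set `Set.range f` coincide
  have hcomp : f ∘ blockIndex s ha hb = f ∘ blockIndex s' ha' hb' :=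
    (hmono.range_inj hmono').1 (by simp only [Set.range_comp, Equiv.range_eq_univ, Set.image_univ])
  have hf : Function.Injective f := hmono.injective.of_comp_right (Equiv.surjective _)
  funext k
  rw [← isLeft_blockIndex (ha := ha) (hb := hb), ← isLeft_blockIndex (ha := ha') (hb := hb'),
    hf (congrFun hcomp k)]

lemma exists_mem_shuffleRegion (hN : a + b = N) {x : (Fin a → ℝ) × (Fin b → ℝ)}
    (hx₁ : ∀ j, 0 < x.1 j) (hx₂ : ∀ j, 0 < x.2 j)
    (hx : ∀ (j : Fin a) (j' : Fin b), psum x.1 (j + 1) ≠ psum x.2 (j' + 1)) :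
    ∃ (s : Fin N → Bool) (ha : letterCount s true N = a) (hb : letterCount s false N = b),
      x ∈ shuffleRegion s ha hb := by
  set f := partialSums a b x
  have hinl : StrictMono fun j => f (.inl j) := fun j j' h => by
    simpa [f, psum_lt_psum_iff hx₁ j.isLt j'.isLt] using h
  have hinr : StrictMono fun j => f (.inr j) := fun j j' h => by
    simpa [f, psum_lt_psum_iff hx₂ j.isLt j'.isLt] using h
  have hf : Function.Injective f := by
    rintro (j | j) (j' | j') h
    · rw [hinl.injective h]
    · exact absurd h (hx j j')
    · exact absurd h.symm (hx j' j)
    · rw [hinr.injective h]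
  let e₀ : Fin N ≃ Fin a ⊕ Fin b := (finSumFinEquiv.trans (finCongr hN)).symm
  let e := (Tuple.sort (f ∘ e₀)).trans e₀
  have he : StrictMono (f ∘ e) :=
    (Tuple.monotone_sort (f ∘ e₀)).strictMono_of_injective (hf.comp e.injective)
  have hmono : ∀ {m m'}, f m < f m' → e.symm m < e.symm m' := fun {m m'} h => by
    rwa [← he.lt_iff_lt, Function.comp_apply, Function.comp_apply, e.apply_symm_apply,
      e.apply_symm_apply]
  obtain ⟨ha, hb, he'⟩ := exists_blockIndex_eq e (fun j j' h => hmono (hinl h))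
    (fun j j' h => hmono (hinr h))
  refine ⟨_, ha, hb, mem_shuffleRegion_iff.2 ⟨by rw [he']; exact he, ?_⟩⟩
  rintro (j | j)
  exacts [psum_succ_pos hx₁ j, psum_succ_pos hx₂ j]

variable {g : Fin N → ℝ}

lemma shuffleEquiv_fst_nonneg (hg : ∀ k, 0 ≤ g k) (j : Fin a) :
    0 ≤ (shuffleEquiv s ha hb g).1 j := by
  have h := psum_succ (shuffleEquiv s ha hb g).1 j
  rw [dif_pos j.isLt, psum_shuffleEquiv_fst g j.isLt, psum_shuffleEquiv_fst g j.isLt.le] at h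
  linarith [monotone_psum hg (hitTime_mono s true (Nat.le_succ j))]

lemma shuffleEquiv_snd_nonneg (hg : ∀ k, 0 ≤ g k) (j : Fin b) :
    0 ≤ (shuffleEquiv s ha hb g).2 j := by
  have h := psum_succ (shuffleEquiv s ha hb g).2 j
  rw [dif_pos j.isLt, psum_shuffleEquiv_snd g j.isLt, psum_shuffleEquiv_snd g j.isLt.le] at h
  linarith [monotone_psum hg (hitTime_mono s false (Nat.le_succ j))]

lemma psum_shuffleEquiv_snd_le_fst_iff (hg : ∀ k, 0 < g k) {j j' : ℕ} (hj : j ≤ b)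
    (hj' : j' ≤ a) :
    psum (shuffleEquiv s ha hb g).2 j ≤ psum (shuffleEquiv s ha hb g).1 j' ↔
      hitTime s false j ≤ hitTime s true j' := by
  rw [psum_shuffleEquiv_snd g hj, psum_shuffleEquiv_fst g hj',
    psum_le_psum_iff hg (hitTime_le s _ _) (hitTime_le s _ _)]

lemma psum_shuffleEquiv_fst_lt_snd_iff (hg : ∀ k, 0 < g k) {j j' : ℕ} (hj : j ≤ a)
    (hj' : j' ≤ b) :
    psum (shuffleEquiv s ha hb g).1 j < psum (shuffleEquiv s ha hb g).2 j' ↔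
      hitTime s true j < hitTime s false j' := by
  rw [psum_shuffleEquiv_fst g hj, psum_shuffleEquiv_snd g hj',
    psum_lt_psum_iff hg (hitTime_le s _ _) (hitTime_le s _ _)]

end Shuffle

def Admissible (i q : ℕ) {N : ℕ} (s : Fin N → Bool) : Prop :=
  letterCount s true N = i + 1 ∧ letterCount s false N = i + 1 ∧
    (∀ j, 1 ≤ j → j ≤ i → hitTime s false j ≤ hitTime s true j) ∧
    hitTime s true (i + 1) < hitTime s false (i + 1) ∧
    (∀ j, 1 ≤ j → j + q ≤ i + 2 → hitTime s true j < hitTime s false (j + q - 2))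

lemma shuffleEquiv_mem_KconeQ_iff {i q N : ℕ} (hq : 2 ≤ q) {s : Fin N → Bool}
    (ha : letterCount s true N = i + 1) (hb : letterCount s false N = i + 1) {g : Fin N → ℝ}
    (hg : ∀ k, 0 < g k) : shuffleEquiv s ha hb g ∈ KconeQ i q ↔ Admissible i q s := by
  have hg' : ∀ k, 0 ≤ g k := fun k => (hg k).le
  simp only [KconeQ, Admissible, Set.mem_ofPred_eq, shuffleEquiv_fst_nonneg hg',
    shuffleEquiv_snd_nonneg hg', implies_true, ha, hb, true_and]
  refine and_congr (forall₃_congr fun j _ hj => ?_)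
    (and_congr ?_ (forall₃_congr fun j _ hj => ?_))
  · exact psum_shuffleEquiv_snd_le_fst_iff hg (by omega) (by omega)
  · exact psum_shuffleEquiv_fst_lt_snd_iff hg le_rfl le_rfl
  · exact psum_shuffleEquiv_fst_lt_snd_iff hg (by omega) (by omega)

lemma ae_ne_zero_of_linearMap {E : Type*} [NormedAddCommGroup E] [NormedSpace ℝ E]
    [MeasurableSpace E] [BorelSpace E] [FiniteDimensional ℝ E] (μ : Measure E)
    [μ.IsAddHaarMeasure] {φ : E →ₗ[ℝ] ℝ} (hφ : φ ≠ 0) :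
    ∀ᵐ x ∂μ, φ x ≠ 0 := by
  rw [ae_iff]
  simp only [ne_eq, not_not]
  exact Measure.addHaar_submodule μ (LinearMap.ker φ) fun h => hφ (LinearMap.ker_eq_top.1 h)

lemma ae_ne_zero_and_psum_ne (a b : ℕ) :
    ∀ᵐ x : (Fin a → ℝ) × (Fin b → ℝ), (∀ j, x.1 j ≠ 0) ∧ (∀ j, x.2 j ≠ 0) ∧
      ∀ (j : Fin a) (j' : Fin b), psum x.1 (j + 1) ≠ psum x.2 (j' + 1) := by
  have : (volume : Measure ((Fin a → ℝ) × (Fin b → ℝ))).IsAddHaarMeasure := by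
    rw [Measure.volume_eq_prod]; exact Measure.prod.instIsAddHaarMeasure _ _
  have hne (φ : (Fin a → ℝ) × (Fin b → ℝ) →ₗ[ℝ] ℝ) (x₀) (hx : φ x₀ ≠ 0) :
      ∀ᵐ x, φ x ≠ 0 :=
    ae_ne_zero_of_linearMap _ fun h => hx (by simp [h])
  simp only [Filter.eventually_and, ae_all_iff]
  refine ⟨fun j => ?_, fun j => ?_, fun j j' => ?_⟩
  · exact hne (LinearMap.proj j ∘ₗ LinearMap.fst ℝ _ _) (Pi.single j 1, 0) (by simp)
  · exact hne (LinearMap.proj j ∘ₗ LinearMap.snd ℝ _ _) (0, Pi.single j 1) (by simp)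
  have hpsum : psum (0 : Fin b → ℝ) (j' + 1) = 0 := by simp [psum]
  have := hne ((LinearMap.proj j ∘ₗ cumsumLinear a) ∘ₗ LinearMap.fst ℝ _ _ -
    (LinearMap.proj j' ∘ₗ cumsumLinear b) ∘ₗ LinearMap.snd ℝ _ _) (Pi.single j 1, 0)
    (by simp [psum_single, hpsum])
  simpa [sub_eq_zero] using this

lemma KconeQ_ae_eq_iUnion_shuffleRegion {i q : ℕ} (hq : 2 ≤ q) :
    KconeQ i q =ᵐ[volume] ⋃ s : {s : Fin (2 * i + 2) → Bool // Admissible i q s},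
      shuffleRegion s.1 s.2.1 s.2.2.1 := by
  rw [Filter.eventuallyEq_set]
  filter_upwards [ae_ne_zero_and_psum_ne (i + 1) (i + 1)] with x ⟨hx₁, hx₂, hx⟩
  refine ⟨fun hK => ?_, fun hU => ?_⟩
  · obtain ⟨s, ha, hb, g, hg, rfl⟩ := exists_mem_shuffleRegion (N := 2 * i + 2) (by omega)
      (fun j => (hK.1 j).lt_of_ne' (hx₁ j)) (fun j => (hK.2.1 j).lt_of_ne' (hx₂ j)) hx
    have hg' : ∀ k, 0 < g k := fun k => hg k (Set.mem_univ k)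
    exact Set.mem_iUnion.2
      ⟨⟨s, (shuffleEquiv_mem_KconeQ_iff hq ha hb hg').1 hK⟩, g, hg, rfl⟩
  · obtain ⟨⟨s, hs⟩, g, hg, rfl⟩ := Set.mem_iUnion.1 hU
    exact (shuffleEquiv_mem_KconeQ_iff hq _ _ fun k => hg k (Set.mem_univ k)).2 hs

lemma pathHeight_eq_letterCount {N : ℕ} (d : Fin N → Bool) {k : ℕ} (hk : k ≤ N) :
    pathHeight d k = (letterCount d true k : ℤ) - letterCount d false k := by
  induction k with
  | zero => simp [pathHeight]
  | succ k ih =>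
    rw [pathHeight, sum_range_succ, ← pathHeight, ih (by omega), dif_pos (by omega)]
    have ht := letterCount_succ d true ⟨k, by omega⟩
    have hf := letterCount_succ d false ⟨k, by omega⟩
    simp only at ht hf
    rw [ht, hf]
    cases d ⟨k, by omega⟩ <;> simp <;> ring

def IsBoundedDyck (i h : ℕ) (d : Fin (2 * i) → Bool) : Prop :=
  (∀ j ≤ 2 * i, 0 ≤ pathHeight d j ∧ pathHeight d j ≤ (h : ℤ)) ∧
    pathHeight d (2 * i) = 0

/-- Up-steps of `d` become `w`-letters, so that `W_j ≤ Z_j` is the nonnegativity of the path. -/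
def shuffleOfDyck {i : ℕ} (d : Fin (2 * i) → Bool) : Fin (2 * i + 2) → Bool :=
  Fin.append (fun t => !d t) ![true, false]

section ShuffleOfDyck

variable {i : ℕ} (d : Fin (2 * i) → Bool)

lemma shuffleOfDyck_castAdd (t : Fin (2 * i)) : shuffleOfDyck d (Fin.castAdd 2 t) = !d t :=
  Fin.append_left _ _ _

@[simp] lemma shuffleOfDyck_penultimate : shuffleOfDyck d ⟨2 * i, by omega⟩ = true :=
  Fin.append_right _ _ 0

@[simp] lemma shuffleOfDyck_last : shuffleOfDyck d ⟨2 * i + 1, by omega⟩ = false :=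
  Fin.append_right _ _ 1

lemma shuffleOfDyck_injective : Function.Injective (shuffleOfDyck (i := i)) := fun d d' h =>
  funext fun t => by simpa [shuffleOfDyck_castAdd] using congrFun h (Fin.castAdd 2 t)

lemma letterCount_shuffleOfDyck {k : ℕ} (hk : k ≤ 2 * i) (c : Bool) :
    letterCount (shuffleOfDyck d) c k = letterCount d (!c) k := by
  rw [← letterCount_not]
  exact letterCount_congr _ c (by omega) hk fun t ht => shuffleOfDyck_castAdd d ⟨t, by omega⟩

lemma letterCount_shuffleOfDyck_tail :
    letterCount (shuffleOfDyck d) true (2 * i + 2) =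
        letterCount (shuffleOfDyck d) true (2 * i) + 1 ∧
      letterCount (shuffleOfDyck d) false (2 * i + 2) =
        letterCount (shuffleOfDyck d) false (2 * i) + 1 ∧
      letterCount (shuffleOfDyck d) true (2 * i + 1) =
        letterCount (shuffleOfDyck d) true (2 * i) + 1 ∧
      letterCount (shuffleOfDyck d) false (2 * i + 1) =
        letterCount (shuffleOfDyck d) false (2 * i) := by
  have e1 := letterCount_succ_of_eq (shuffleOfDyck_penultimate d)
  have e2 := letterCount_succ_of_ne (c := false) (k := ⟨2 * i, by omega⟩)
    (by simp : shuffleOfDyck d _ ≠ false)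
  have e3 := letterCount_succ_of_ne (c := true) (k := ⟨2 * i + 1, by omega⟩)
    (by simp : shuffleOfDyck d _ ≠ true)
  have e4 := letterCount_succ_of_eq (shuffleOfDyck_last d)
  simp only [Nat.add_assoc, Nat.reduceAdd] at e1 e2 e3 e4
  omega

lemma isBoundedDyck_iff_letterCount {h : ℕ} : IsBoundedDyck i h d ↔
    (∀ k ≤ 2 * i,
      letterCount (shuffleOfDyck d) true k ≤ letterCount (shuffleOfDyck d) false k ∧
        letterCount (shuffleOfDyck d) false k ≤ letterCount (shuffleOfDyck d) true k + h) ∧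
    letterCount (shuffleOfDyck d) true (2 * i) = i ∧
    letterCount (shuffleOfDyck d) false (2 * i) = i := by
  have hheight : ∀ k ≤ 2 * i, pathHeight d k = (letterCount (shuffleOfDyck d) false k : ℤ) -
      letterCount (shuffleOfDyck d) true k := fun k hk => by
    rw [pathHeight_eq_letterCount d hk, letterCount_shuffleOfDyck d hk,
      letterCount_shuffleOfDyck d hk, Bool.not_false, Bool.not_true]
  have htotal := letterCount_true_add_false (shuffleOfDyck d) (k := 2 * i) (by omega)
  rw [IsBoundedDyck, hheight _ le_rfl]
  refine and_congr (forall₂_congr fun k hk => ?_) (by omega)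
  rw [hheight k hk]
  omega

lemma hitTime_shuffleOfDyck (hT : letterCount (shuffleOfDyck d) true (2 * i) = i)
    (hF : letterCount (shuffleOfDyck d) false (2 * i) = i) :
    hitTime (shuffleOfDyck d) true (i + 1) = 2 * i + 1 ∧
      hitTime (shuffleOfDyck d) false (i + 1) = 2 * i + 2 := by
  obtain ⟨-, eF2, eT1, -⟩ := letterCount_shuffleOfDyck_tail d
  exact ⟨hitTime_eq_succ (k := ⟨2 * i, by omega⟩) (shuffleOfDyck_penultimate d)
      (by simp only; omega),
    hitTime_eq_succ (k := ⟨2 * i + 1, by omega⟩) (shuffleOfDyck_last d)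
      (by simp only [Nat.add_assoc, Nat.reduceAdd]; omega)⟩

end ShuffleOfDyck

section Admissible

variable {i q : ℕ}

lemma Admissible.letterCount_true_le_false {N : ℕ} {s : Fin N → Bool} (h : Admissible i q s)
    (k : Fin N) (hk : letterCount s true k ≤ i) :
    letterCount s true k ≤ letterCount s false k := by
  by_contra! hlt
  have := hitTime_le_hitTime_iff.1 (h.2.2.1 _ (by omega) hk) k hlt
  omega

lemma Admissible.exists_shuffleOfDyck {s : Fin (2 * i + 2) → Bool} (h : Admissible i q s) :
    ∃ d, shuffleOfDyck d = s := by
  -- otherwise the last `z`-letter would come after the last `w`-letter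
  have hlast : s ⟨2 * i + 1, by omega⟩ = false := by
    rw [Bool.eq_false_iff]
    intro hne
    have e := letterCount_succ_of_eq hne
    simp only [Nat.add_assoc, Nat.reduceAdd, h.1] at e
    have := (lt_hitTime_iff s true (j := i + 1) ⟨2 * i + 1, by omega⟩).2 (by simp only; omega)
    have := hitTime_le s false (i + 1)
    have := h.2.2.2.1
    simp only at *
    omega
  -- the last `z`-letter has `i` letters `z` and, by `W_j ≤ Z_j`, at least `i` letters `w`
  -- before it
  have hpen : s ⟨2 * i, by omega⟩ = true := by
    obtain ⟨p, hp, hpc, -⟩ :=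
      exists_hitTime_eq_succ (s := s) (c := true) (j := i + 1) (by omega) h.1.ge
    have := h.letterCount_true_le_false p (by omega)
    have := letterCount_true_add_false s p.isLt.le
    have hp1 : (p : ℕ) ≠ 2 * i + 1 := fun e => by
      rw [show p = ⟨2 * i + 1, by omega⟩ from Fin.ext e, hlast] at hp
      exact Bool.false_ne_true hp
    rwa [show p = ⟨2 * i, by omega⟩ from Fin.ext (by simp only; omega)] at hp
  refine ⟨fun t => !s (Fin.castAdd 2 t), funext fun k => ?_⟩
  induction k using Fin.addCases with
  | left t => rw [shuffleOfDyck_castAdd, Bool.not_not]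
  | right t =>
    fin_cases t
    · exact (shuffleOfDyck_penultimate _).trans hpen.symm
    · exact (shuffleOfDyck_last _).trans hlast.symm

lemma Admissible.isBoundedDyck {d : Fin (2 * i) → Bool} (h : Admissible i q (shuffleOfDyck d)) :
    IsBoundedDyck i (q - 2) d := by
  obtain ⟨eT2, eF2, -, -⟩ := letterCount_shuffleOfDyck_tail d
  have hT : letterCount (shuffleOfDyck d) true (2 * i) = i := by have := h.1; omega
  have hF : letterCount (shuffleOfDyck d) false (2 * i) = i := by have := h.2.1; omega
  refine (isBoundedDyck_iff_letterCount d).2 ⟨fun k hk => ⟨?_, ?_⟩, hT, hF⟩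
  · have := letterCount_mono (shuffleOfDyck d) true hk
    exact h.letterCount_true_le_false ⟨k, by omega⟩ (by simp only; omega)
  · -- a prefix with `T` letters `z` and more than `T + q - 2` letters `w` has
    -- `W_{T+q-1}` before `Z_{T+1}`
    by_contra! hup
    set T := letterCount (shuffleOfDyck d) true k
    have := letterCount_mono (shuffleOfDyck d) false hk
    have hlt := (lt_hitTime_iff (shuffleOfDyck d) true (j := T + 1) ⟨k, by omega⟩).2
      (by simp only [T]; omega)
    have := (lt_hitTime_iff (shuffleOfDyck d) false ⟨k, by omega⟩).1
      (hlt.trans (h.2.2.2.2 (T + 1) (by omega) (by omega)))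
    simp only at this
    omega

lemma admissible_shuffleOfDyck (hq : 2 ≤ q) {d : Fin (2 * i) → Bool}
    (hd : IsBoundedDyck i (q - 2) d) : Admissible i q (shuffleOfDyck d) := by
  obtain ⟨eT2, eF2, eT1, eF1⟩ := letterCount_shuffleOfDyck_tail d
  obtain ⟨hbound, hT, hF⟩ := (isBoundedDyck_iff_letterCount d).1 hd
  refine ⟨by omega, by omega, fun j hj hji => ?_, ?_, fun j hj hjq => ?_⟩
  · refine hitTime_le_hitTime_iff.2 fun k hk => ?_
    by_cases hk2 : (k : ℕ) ≤ 2 * i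
    · exact (hbound k hk2).1.trans_lt hk
    · rw [show (k : ℕ) = 2 * i + 1 by omega] at hk
      omega
  · rw [(hitTime_shuffleOfDyck d hT hF).1, (hitTime_shuffleOfDyck d hT hF).2]
    omega
  · refine lt_of_le_of_ne (hitTime_le_hitTime_iff.2 fun k hk => ?_)
      (hitTime_ne (by simp) (by omega) (by omega) (by omega) (by omega))
    by_cases hk2 : (k : ℕ) ≤ 2 * i
    · have := (hbound k hk2).2
      omega
    · rw [show (k : ℕ) = 2 * i + 1 by omega] at hk
      omega

lemma Admissible.hitTime_eq {s : Fin (2 * i + 2) → Bool} (h : Admissible i q s) :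
    hitTime s true (i + 1) = 2 * i + 1 ∧ hitTime s false (i + 1) = 2 * i + 2 := by
  obtain ⟨d, rfl⟩ := h.exists_shuffleOfDyck
  obtain ⟨-, hT, hF⟩ := (isBoundedDyck_iff_letterCount d).1 h.isBoundedDyck
  exact hitTime_shuffleOfDyck d hT hF

lemma card_admissible_eq_boundedDyck (hq : 2 ≤ q) :
    Nat.card {s : Fin (2 * i + 2) → Bool // Admissible i q s} = boundedDyck i (q - 2) := by
  refine (Nat.card_congr (Equiv.ofBijective
    (fun d : {d // IsBoundedDyck i (q - 2) d} =>
      (⟨shuffleOfDyck d.1, admissible_shuffleOfDyck hq d.2⟩ : {s // Admissible i q s}))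
    ⟨fun d d' h => Subtype.ext (shuffleOfDyck_injective (congrArg Subtype.val h)),
      fun s => ?_⟩)).symm
  obtain ⟨d, hd⟩ := s.2.exists_shuffleOfDyck
  exact ⟨⟨d, (hd ▸ s.2).isBoundedDyck⟩, Subtype.ext hd⟩

end Admissible

section ExpIntegral

variable {ι : Type*} [Fintype ι] {c : ι → ℝ}

lemma exp_neg_sum_mul_eq_prod (c g : ι → ℝ) :
    Real.exp (-∑ k, c k * g k) = ∏ k, Real.exp (-c k * g k) := by
  rw [← sum_neg_distrib, Real.exp_sum]
  simp only [neg_mul]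

lemma restrict_volume_pi_Ioi :
    (volume : Measure (ι → ℝ)).restrict (Set.univ.pi fun _ => Set.Ioi 0) =
      Measure.pi fun _ => volume.restrict (Set.Ioi 0) := by
  rw [volume_pi, Measure.restrict_pi_pi]

lemma integrableOn_exp_neg_sum_mul (hc : ∀ k, 0 < c k) :
    IntegrableOn (fun g : ι → ℝ => Real.exp (-∑ k, c k * g k))
      (Set.univ.pi fun _ => Set.Ioi 0) := by
  simp_rw [IntegrableOn, restrict_volume_pi_Ioi, exp_neg_sum_mul_eq_prod]
  exact Integrable.fintype_prod fun k => integrableOn_exp_mul_Ioi (neg_lt_zero.2 (hc k)) 0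

lemma setIntegral_exp_neg_sum_mul (hc : ∀ k, 0 < c k) :
    ∫ g in Set.univ.pi (fun _ => Set.Ioi 0), Real.exp (-∑ k, c k * g k) =
      ∏ k, (c k)⁻¹ := by
  simp_rw [restrict_volume_pi_Ioi, exp_neg_sum_mul_eq_prod]
  rw [integral_fintype_prod_eq_prod (f := fun k x => Real.exp (-c k * x))]
  refine prod_congr rfl fun k _ => ?_
  rw [integral_exp_mul_Ioi (neg_lt_zero.2 (hc k)), mul_zero, Real.exp_zero, neg_div, div_neg,
    neg_neg, one_div]

end ExpIntegral

section Region

variable {i q : ℕ} {s : Fin (2 * i + 2) → Bool}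

lemma sum_fst_add_sum_snd_shuffleEquiv (h : Admissible i q s) (g : Fin (2 * i + 2) → ℝ) :
    ∑ j, (shuffleEquiv s h.1 h.2.1 g).1 j + ∑ j, (shuffleEquiv s h.1 h.2.1 g).2 j =
      ∑ k, (if k = Fin.last (2 * i + 1) then 1 else 2) * g k := by
  rw [sum_eq_psum, sum_eq_psum, psum_shuffleEquiv_fst g le_rfl, psum_shuffleEquiv_snd g le_rfl,
    h.hitTime_eq.1, h.hitTime_eq.2, ← sum_eq_psum]
  have hlast := psum_succ g (2 * i + 1)
  rw [dif_pos (by omega), ← sum_eq_psum] at hlast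
  have hterm : ∀ k : Fin (2 * i + 2), (if k = Fin.last (2 * i + 1) then 1 else 2) * g k =
      2 * g k - if k = Fin.last (2 * i + 1) then g k else 0 := fun k => by
    split_ifs <;> ring
  simp only [hterm, sum_sub_distrib, ← mul_sum, sum_ite_eq', mem_univ, if_true, hlast]
  simp [Fin.last]
  ring

lemma weight_pos (k : Fin (2 * i + 2)) : (0 : ℝ) < if k = Fin.last (2 * i + 1) then 1 else 2 := by
  split_ifs <;> norm_num

lemma integrableOn_shuffleRegion (h : Admissible i q s) :
    IntegrableOn (fun u => Real.exp (-(∑ j, u.1 j + ∑ j, u.2 j)))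
      (shuffleRegion s h.1 h.2.1) := by
  rw [shuffleRegion, (measurePreserving_shuffleEquiv s h.1 h.2.1).integrableOn_image
    (shuffleEquiv s h.1 h.2.1).measurableEmbedding]
  simp only [Function.comp_def, sum_fst_add_sum_snd_shuffleEquiv h]
  exact integrableOn_exp_neg_sum_mul weight_pos

lemma integral_shuffleRegion (h : Admissible i q s) :
    ∫ u in shuffleRegion s h.1 h.2.1, Real.exp (-(∑ j, u.1 j + ∑ j, u.2 j)) =
      2⁻¹ ^ (2 * i + 1) := by
  rw [shuffleRegion, (measurePreserving_shuffleEquiv s h.1 h.2.1).setIntegral_image_emb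
    (shuffleEquiv s h.1 h.2.1).measurableEmbedding]
  simp only [sum_fst_add_sum_snd_shuffleEquiv h]
  rw [setIntegral_exp_neg_sum_mul weight_pos, Fin.prod_univ_castSucc]
  simp [Fin.castSucc_ne_last]

end Region

end DyckCone

open DyckCone

/-- `∫_{K_i(q)} e^{−‖u‖₁} du = C_{i,q−2} / 2^{2i+1}`. -/
theorem integral_over_KconeQ (i q : ℕ) (hq : 2 ≤ q) :
    ∫ u in KconeQ i q, Real.exp (-(∑ j, u.1 j + ∑ j, u.2 j))
      ∂(volume : Measure ((Fin (i+1) → ℝ) × (Fin (i+1) → ℝ)))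
      = (boundedDyck i (q - 2) : ℝ) / 2 ^ (2 * i + 1) := by
  classical
  rw [setIntegral_congr_set (KconeQ_ae_eq_iUnion_shuffleRegion hq),
    integral_iUnion_fintype (fun s => measurableSet_shuffleRegion _ _ _)
      (fun s s' hss' => Set.disjoint_left.2 fun x hx hx' =>
        hss' (Subtype.ext (eq_of_mem_shuffleRegion hx hx')))
      (fun s => integrableOn_shuffleRegion s.2)]
  simp only [fun s : {s // Admissible i q s} => integral_shuffleRegion s.2, Finset.sum_const,
    Finset.card_univ, ← Nat.card_eq_fintype_card, card_admissible_eq_boundedDyck hq, nsmul_eq_mul,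
    div_eq_mul_inv, inv_pow]
end

section
/- Let C_h(x) = Σ_{i≥0} C_{i,h} x^i be the generating function of Dyck paths of bounded height h. Then C_0(x) = 1 and C_h(x) = 1/(1 − x·C_{h−1}(x)) for h ≥ 1 (as an identity of formal power series, or of functions for |x| small), and evaluation at x = 1/4 gives C_h(1/4) = 2(h+1)/(h+2) for all h ≥ 0. In particular Σ_{i≥0} C_{i,h}/4^i = 2(h+1)/(h+2). -/
/-- The generating function `C_h(x) = Σ_i C_{i,h} x^i`. -/
noncomputable def boundedDyckGF (h : ℕ) (x : ℝ) : ℝ :=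
  ∑' i : ℕ, (boundedDyck i h : ℝ) * x ^ i

/-!
Bounded Dyck paths are Mathlib's `DyckWord`s all of whose prefixes have at most `h` more up-steps
than down-steps. In the first-return decomposition `p = (a) b` of a nonempty Dyck word, `p` has
height at most `h + 1` iff `a` has height at most `h` and `b` height at most `h + 1`; this gives
`C_{n+1,h+1} = ∑_{i+j=n} C_{i,h} C_{j,h+1}`, that is `C_{h+1} = 1 + x C_h C_{h+1}`.

The same recurrence gives convergence for `|x| ≤ 1/4`: a partial Cauchy product is at most the
product of the partial sums, so by induction on `h` and then on `N` the partial sums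
`∑_{i<N} C_{i,h} 4^{-i}` stay below `1 + 2 · 2 / 4 = 2`. Solving `C_{h+1} = 1 + x C_h C_{h+1}`
at `x = 1/4` then gives `2(h+1)/(h+2)` by induction on `h`.
-/

open DyckStep List Finset

theorem List.forall_prefix_append_iff {α : Type*} {P : List α → Prop} {l₁ l₂ : List α} :
    (∀ l, l <+: l₁ ++ l₂ → P l) ↔ (∀ l, l <+: l₁ → P l) ∧ ∀ l, l <+: l₂ → P (l₁ ++ l) := by
  refine ⟨fun H => ⟨fun l hl => H l (hl.trans (prefix_append _ _)),
    fun l hl => H _ ((prefix_append_right_inj l₁).2 hl)⟩, fun ⟨H₁, H₂⟩ l hl => ?_⟩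
  rcases le_total l.length l₁.length with hle | hle
  · exact H₁ l ((isPrefix_append_of_length hle).1 hl)
  · obtain ⟨t, rfl⟩ := prefix_iff_exists_eq_append.1
      (prefix_of_prefix_length_le (prefix_append l₁ l₂) hl hle)
    exact H₂ t ((prefix_append_right_inj l₁).1 hl)

theorem List.forall_prefix_cons_iff {α : Type*} {P : List α → Prop} {a : α} {l : List α} :
    (∀ l', l' <+: a :: l → P l') ↔ P [] ∧ ∀ l', l' <+: l → P (a :: l') := by
  simp only [prefix_cons_iff]
  aesop

theorem Nat.card_subtype_add_eq_sum_antidiagonal {α β : Type*} (f : α → ℕ) (g : β → ℕ)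
    [∀ i, Finite {a // f a = i}] [∀ j, Finite {b // g b = j}] (n : ℕ) :
    Nat.card {q : α × β // f q.1 + g q.2 = n} =
      ∑ ij ∈ antidiagonal n, Nat.card {a // f a = ij.1} * Nat.card {b // g b = ij.2} := by
  let e : {q : α × β // f q.1 + g q.2 = n} ≃
      Σ ij : antidiagonal n, {a // f a = ij.1.1} × {b // g b = ij.1.2} :=
    { toFun q := ⟨⟨(f q.1.1, g q.1.2), mem_antidiagonal.2 q.2⟩, ⟨q.1.1, rfl⟩, ⟨q.1.2, rfl⟩⟩
      invFun x := ⟨(x.2.1, x.2.2), by rw [x.2.1.2, x.2.2.2]; exact mem_antidiagonal.1 x.1.2⟩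
      left_inv q := rfl
      right_inv := by
        rintro ⟨⟨⟨i, j⟩, hij⟩, ⟨a, rfl : f a = i⟩, ⟨b, rfl : g b = j⟩⟩
        rfl }
  rw [Nat.card_congr e, Nat.card_sigma, ← Finset.sum_coe_sort (antidiagonal n)]
  simp only [Nat.card_prod]

theorem Finset.sum_range_sum_antidiagonal_le_mul {R : Type*} [CommSemiring R] [PartialOrder R]
    [IsOrderedRing R] {a b : ℕ → R} (ha : ∀ i, 0 ≤ a i) (hb : ∀ j, 0 ≤ b j) (N : ℕ) :
    ∑ n ∈ range N, ∑ ij ∈ antidiagonal n, a ij.1 * b ij.2 ≤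
      (∑ i ∈ range N, a i) * ∑ j ∈ range N, b j := by
  induction N generalizing a with
  | zero => simp
  | succ N ih =>
    calc ∑ n ∈ range (N + 1), ∑ ij ∈ antidiagonal n, a ij.1 * b ij.2
        = a 0 * ∑ j ∈ range (N + 1), b j +
            ∑ n ∈ range N, ∑ ij ∈ antidiagonal n, a (ij.1 + 1) * b ij.2 := by
          rw [sum_range_succ', sum_range_succ' b]
          simp only [Nat.sum_antidiagonal_succ, sum_add_distrib, mul_add, mul_sum,
            HasAntidiagonal.antidiagonal_zero, sum_singleton]
          ring
      _ ≤ a 0 * ∑ j ∈ range (N + 1), b j + (∑ i ∈ range N, a (i + 1)) * ∑ j ∈ range N, b j := by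
          gcongr
          exact ih fun i => ha _
      _ ≤ a 0 * ∑ j ∈ range (N + 1), b j +
            (∑ i ∈ range N, a (i + 1)) * ∑ j ∈ range (N + 1), b j := by
          have : 0 ≤ ∑ i ∈ range N, a (i + 1) := sum_nonneg fun i _ => ha _
          gcongr
          · exact fun j _ _ => hb j
          · omega
      _ = (∑ i ∈ range (N + 1), a i) * ∑ j ∈ range (N + 1), b j := by
          rw [sum_range_succ' a]
          ring

namespace DyckWord

def HeightLE (h : ℕ) (p : DyckWord) : Prop :=
  ∀ l, l <+: p.toList → l.count U ≤ l.count D + h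

lemma toList_nest_add (a b : DyckWord) :
    (a.nest + b).toList = U :: (a.toList ++ D :: b.toList) := by
  change U :: (a.toList ++ [D]) ++ b.toList = _
  simp

lemma heightLE_nest_add_iff {a b : DyckWord} {h : ℕ} :
    (a.nest + b).HeightLE (h + 1) ↔ a.HeightLE h ∧ b.HeightLE (h + 1) := by
  have hbal := a.count_U_eq_count_D
  simp only [HeightLE, toList_nest_add, forall_prefix_cons_iff, forall_prefix_append_iff,
    count_cons, count_append, count_nil, BEq.rfl, beq_iff_eq, reduceCtorEq, if_true, if_false]
  constructor
  · rintro ⟨-, ha, -, hb⟩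
    exact ⟨fun l hl => by have := ha l hl; omega, fun l hl => by have := hb l hl; omega⟩
  · rintro ⟨ha, hb⟩
    exact ⟨by omega, fun l hl => by have := ha l hl; omega, by omega,
      fun l hl => by have := hb l hl; omega⟩

lemma eq_zero_of_heightLE_zero {p : DyckWord} (hp : p.HeightLE 0) : p = 0 := by
  by_contra hp0
  rw [← nest_insidePart_add_outsidePart hp0] at hp
  simpa using hp [U] (by simp [toList_nest_add])

lemma semilength_eq_iff_length_eq {p : DyckWord} {n : ℕ} :
    p.semilength = n ↔ p.toList.length = 2 * n := by
  rw [← two_mul_semilength_eq_length]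
  omega

lemma eq_zero_of_semilength_eq_zero {p : DyckWord} (hp : p.semilength = 0) : p = 0 := by
  rw [← toList_eq_nil, ← length_eq_zero_iff, semilength_eq_iff_length_eq.1 hp]

instance (h n : ℕ) : Finite {p : {p : DyckWord // p.HeightLE h} // p.1.semilength = n} :=
  Finite.of_injective (fun p => (⟨p.1.1, p.2⟩ : {p : DyckWord // p.semilength = n}))
    fun _ _ hpq => by simpa [Subtype.ext_iff] using hpq

def firstReturnEquiv (h n : ℕ) :
    {p : {p : DyckWord // p.HeightLE (h + 1)} // p.1.semilength = n + 1} ≃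
    {q : {a : DyckWord // a.HeightLE h} × {b : DyckWord // b.HeightLE (h + 1)} //
      q.1.1.semilength + q.2.1.semilength = n} where
  toFun p :=
    have hp : p.1.1 ≠ 0 := fun h0 => by simpa [h0] using p.2
    have hab := heightLE_nest_add_iff.1 ((nest_insidePart_add_outsidePart hp).symm ▸ p.1.2)
    ⟨(⟨p.1.1.insidePart, hab.1⟩, ⟨p.1.1.outsidePart, hab.2⟩), by
      have := semilength_insidePart_add_semilength_outsidePart_add_one hp
      have := p.2
      dsimp only
      omega⟩
  invFun q := ⟨⟨q.1.1.1.nest + q.1.2.1, heightLE_nest_add_iff.2 ⟨q.1.1.2, q.1.2.2⟩⟩, by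
    have := q.2
    simp only [semilength_add, semilength_nest]
    omega⟩
  left_inv p := by
    have hp : p.1.1 ≠ 0 := fun h0 => by simpa [h0] using p.2
    exact Subtype.ext (Subtype.ext (nest_insidePart_add_outsidePart hp))
  right_inv q := by
    ext <;> simp

end DyckWord

def stepsToWord {n : ℕ} (s : Fin n → Bool) : List DyckStep :=
  List.ofFn fun t => if s t then U else D

lemma length_stepsToWord {n : ℕ} (s : Fin n → Bool) : (stepsToWord s).length = n := by
  simp [stepsToWord]

lemma pathHeight_eq_count_sub_count {n : ℕ} (s : Fin n → Bool) (j : ℕ) :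
    pathHeight s j = ((stepsToWord s).take j).count U - ((stepsToWord s).take j).count D := by
  induction j with
  | zero => simp [pathHeight]
  | succ j ih =>
    rw [pathHeight, Finset.sum_range_succ, ← pathHeight, ih, take_add_one]
    by_cases hj : j < n
    · by_cases hs : s ⟨j, hj⟩ <;> simp [stepsToWord, hj, hs] <;> ring
    · simp [stepsToWord, hj]

lemma pathHeight_bounds_iff {n h : ℕ} (s : Fin n → Bool) :
    ((∀ j ≤ n, 0 ≤ pathHeight s j ∧ pathHeight s j ≤ (h : ℤ)) ∧ pathHeight s n = 0) ↔
      (∀ l, l <+: stepsToWord s → l.count D ≤ l.count U ∧ l.count U ≤ l.count D + h) ∧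
        (stepsToWord s).count U = (stepsToWord s).count D := by
  simp only [pathHeight_eq_count_sub_count, take_of_length_le (length_stepsToWord s).le]
  refine and_congr ⟨fun H l hl => ?_, fun H j _ => ?_⟩ (by omega)
  · have := H l.length (length_stepsToWord s ▸ hl.length_le)
    rw [← prefix_iff_eq_take.1 hl] at this
    omega
  · have := H _ (take_prefix j _)
    omega

lemma stepsToWord_decide_getElem {n : ℕ} (l : List DyckStep) (hl : l.length = n) :
    stepsToWord (fun t : Fin n => decide (l[t.1]'(by rw [hl]; exact t.2) = U)) = l := by
  apply List.ext_getElem (by simp [length_stepsToWord, hl])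
  intro t _ _
  rcases l[t].dichotomy with h | h <;> simp [stepsToWord, h]

noncomputable def boundedDyckEquiv (i h : ℕ) :
    {s : Fin (2*i) → Bool //
      (∀ j ≤ 2*i, 0 ≤ pathHeight s j ∧ pathHeight s j ≤ (h : ℤ)) ∧ pathHeight s (2*i) = 0} ≃
    {p : {p : DyckWord // p.HeightLE h} // p.1.semilength = i} where
  toFun s :=
    have hw := (pathHeight_bounds_iff s.1).1 s.2
    ⟨⟨⟨stepsToWord s.1, hw.2, fun j => (hw.1 _ (take_prefix j _)).1⟩, fun l hl => (hw.1 l hl).2⟩,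
      DyckWord.semilength_eq_iff_length_eq.2 (length_stepsToWord s.1)⟩
  invFun p :=
    have hlen := DyckWord.semilength_eq_iff_length_eq.1 p.2
    ⟨fun t => decide (p.1.1.toList[t.1]'(by rw [hlen]; exact t.2) = U), by
      rw [pathHeight_bounds_iff, stepsToWord_decide_getElem _ hlen]
      refine ⟨fun l hl => ⟨?_, p.1.2 l hl⟩, p.1.1.count_U_eq_count_D⟩
      rw [prefix_iff_eq_take.1 hl]
      exact p.1.1.count_D_le_count_U _⟩
  left_inv s := by
    ext t
    simp [stepsToWord]
  right_inv p := Subtype.ext <| Subtype.ext <| DyckWord.ext <|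
    stepsToWord_decide_getElem _ (DyckWord.semilength_eq_iff_length_eq.1 p.2)

lemma boundedDyck_eq_card (i h : ℕ) :
    boundedDyck i h = Nat.card {p : {p : DyckWord // p.HeightLE h} // p.1.semilength = i} :=
  Nat.card_congr (boundedDyckEquiv i h)

lemma boundedDyck_zero_left (h : ℕ) : boundedDyck 0 h = 1 := by
  rw [boundedDyck_eq_card, Nat.card_eq_one_iff_exists]
  refine ⟨⟨⟨0, fun l hl => by simp [prefix_nil.1 hl]⟩, rfl⟩, fun p => ?_⟩
  exact Subtype.ext (Subtype.ext (DyckWord.eq_zero_of_semilength_eq_zero p.2))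

lemma boundedDyck_succ_zero (n : ℕ) : boundedDyck (n + 1) 0 = 0 := by
  rw [boundedDyck_eq_card, Nat.card_eq_zero]
  refine .inl ⟨fun p => ?_⟩
  simpa [DyckWord.eq_zero_of_heightLE_zero p.1.2] using p.2

lemma boundedDyck_succ_succ (n h : ℕ) : boundedDyck (n + 1) (h + 1) =
    ∑ ij ∈ antidiagonal n, boundedDyck ij.1 h * boundedDyck ij.2 (h + 1) := by
  simp only [boundedDyck_eq_card]
  rw [Nat.card_congr (DyckWord.firstReturnEquiv h n)]
  exact Nat.card_subtype_add_eq_sum_antidiagonal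
    (fun a : {a : DyckWord // a.HeightLE h} => a.1.semilength)
    (fun b : {b : DyckWord // b.HeightLE (h + 1)} => b.1.semilength) n

lemma boundedDyck_mul_pow_succ (n h : ℕ) (x : ℝ) :
    (boundedDyck (n + 1) (h + 1) : ℝ) * x ^ (n + 1) =
      x * ∑ ij ∈ antidiagonal n,
        ((boundedDyck ij.1 h : ℝ) * x ^ ij.1) * ((boundedDyck ij.2 (h + 1) : ℝ) * x ^ ij.2) := by
  rw [boundedDyck_succ_succ, Nat.cast_sum, Finset.sum_mul, Finset.mul_sum]
  refine Finset.sum_congr rfl fun ij hij => ?_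
  rw [← mem_antidiagonal.1 hij]
  push_cast
  ring

lemma sum_range_boundedDyck_le_two (h N : ℕ) :
    ∑ i ∈ range N, (boundedDyck i h : ℝ) * (1 / 4) ^ i ≤ 2 := by
  induction h generalizing N with
  | zero =>
    cases N with
    | zero => simp
    | succ N => simp [Finset.sum_range_succ', boundedDyck_succ_zero, boundedDyck_zero_left]
  | succ h ihh =>
    induction N with
    | zero => simp
    | succ N ihN =>
      calc ∑ i ∈ range (N + 1), (boundedDyck i (h + 1) : ℝ) * (1 / 4) ^ i
          = 1 / 4 * ∑ n ∈ range N, ∑ ij ∈ antidiagonal n,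
              ((boundedDyck ij.1 h : ℝ) * (1 / 4) ^ ij.1) *
                ((boundedDyck ij.2 (h + 1) : ℝ) * (1 / 4) ^ ij.2) + 1 := by
            simp only [Finset.sum_range_succ', boundedDyck_mul_pow_succ, ← mul_sum,
              boundedDyck_zero_left]
            norm_num
        _ ≤ 1 / 4 * ((∑ i ∈ range N, (boundedDyck i h : ℝ) * (1 / 4) ^ i) *
              ∑ j ∈ range N, (boundedDyck j (h + 1) : ℝ) * (1 / 4) ^ j) + 1 := by
            gcongr
            exact sum_range_sum_antidiagonal_le_mul
              (a := fun i => (boundedDyck i h : ℝ) * (1 / 4) ^ i)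
              (b := fun j => (boundedDyck j (h + 1) : ℝ) * (1 / 4) ^ j)
              (fun _ => by positivity) (fun _ => by positivity) N
        _ ≤ 1 / 4 * (2 * 2) + 1 := by
            have := ihh N
            gcongr
        _ = 2 := by norm_num

lemma summable_norm_boundedDyck_mul_pow (h : ℕ) {x : ℝ} (hx : |x| ≤ 1 / 4) :
    Summable fun i => ‖(boundedDyck i h : ℝ) * x ^ i‖ := by
  have h4 : Summable fun i => (boundedDyck i h : ℝ) * (1 / 4) ^ i :=
    summable_of_sum_range_le (fun i => by positivity) (sum_range_boundedDyck_le_two h)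
  refine h4.of_nonneg_of_le (fun i => norm_nonneg _) fun i => ?_
  rw [norm_mul, norm_pow, Real.norm_natCast, Real.norm_eq_abs]
  gcongr

lemma boundedDyckGF_zero (x : ℝ) : boundedDyckGF 0 x = 1 := by
  rw [boundedDyckGF, tsum_eq_single 0 fun i hi => ?_]
  · simp [boundedDyck_zero_left]
  · obtain ⟨n, rfl⟩ := Nat.exists_eq_succ_of_ne_zero hi
    simp [boundedDyck_succ_zero]

lemma boundedDyckGF_succ_eq (h : ℕ) {x : ℝ} (hx : |x| ≤ 1 / 4) :
    boundedDyckGF (h + 1) x = 1 + x * boundedDyckGF h x * boundedDyckGF (h + 1) x := by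
  have hcauchy := tsum_mul_tsum_eq_tsum_sum_antidiagonal_of_summable_norm
    (summable_norm_boundedDyck_mul_pow h hx) (summable_norm_boundedDyck_mul_pow (h + 1) hx)
  calc boundedDyckGF (h + 1) x
      = 1 + ∑' n, (boundedDyck (n + 1) (h + 1) : ℝ) * x ^ (n + 1) := by
        rw [boundedDyckGF, (summable_norm_boundedDyck_mul_pow (h + 1) hx).of_norm.tsum_eq_zero_add,
          boundedDyck_zero_left]
        simp
    _ = 1 + x * boundedDyckGF h x * boundedDyckGF (h + 1) x := by
        simp_rw [boundedDyck_mul_pow_succ]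
        rw [tsum_mul_left, boundedDyckGF, boundedDyckGF, mul_assoc, hcauchy]

lemma boundedDyckGF_succ (h : ℕ) {x : ℝ} (hx : |x| ≤ 1 / 4) :
    boundedDyckGF (h + 1) x = 1 / (1 - x * boundedDyckGF h x) := by
  have hmul : boundedDyckGF (h + 1) x * (1 - x * boundedDyckGF h x) = 1 := by
    linear_combination boundedDyckGF_succ_eq h hx
  exact eq_one_div_of_mul_eq_one_left hmul

lemma boundedDyckGF_one_fourth (h : ℕ) : boundedDyckGF h (1 / 4) = 2 * (h + 1) / (h + 2) := by
  induction h with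
  | zero => norm_num [boundedDyckGF_zero]
  | succ h ih =>
    rw [boundedDyckGF_succ h (by norm_num [abs_of_pos]), ih]
    have hden : (1 : ℝ) - 1 / 4 * (2 * (h + 1) / (h + 2)) = (h + 3) / (2 * (h + 2)) := by
      field_simp
      ring
    rw [hden, one_div_div]
    push_cast
    field_simp
    ring

/-- `C_0(x) = 1`, `C_h(x) = 1/(1 − x C_{h−1}(x))` for `h ≥ 1` (for `|x|` small), and
`C_h(1/4) = 2(h+1)/(h+2)`, i.e. `Σ_i C_{i,h}/4^i = 2(h+1)/(h+2)`. -/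
theorem boundedDyckGF_formula :
    (∀ x : ℝ, boundedDyckGF 0 x = 1) ∧
    (∀ h : ℕ, 1 ≤ h → ∀ x : ℝ, |x| ≤ 1/4 →
      boundedDyckGF h x = 1 / (1 - x * boundedDyckGF (h-1) x)) ∧
    (∀ h : ℕ, boundedDyckGF h (1/4) = 2 * (h + 1) / (h + 2)) ∧
    (∀ h : ℕ, ∑' i : ℕ, (boundedDyck i h : ℝ) / 4 ^ i = 2 * (h + 1) / (h + 2)) := by
  refine ⟨boundedDyckGF_zero, fun h hh x hx => ?_, boundedDyckGF_one_fourth, fun h => ?_⟩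
  · obtain ⟨h, rfl⟩ := Nat.exists_eq_add_of_le' hh
    exact boundedDyckGF_succ h hx
  · simpa only [boundedDyckGF, one_div_pow, mul_one_div] using boundedDyckGF_one_fourth h
end

section
/- Let X_n be a set of n ≥ 3 points chosen independently and uniformly at random from S^1 (circle of circumference 1), and let 0 < r ≤ 1. Then with probability at least 1 − 1/n, every x ∈ X_n satisfies d⃗(x, f_r(x)) ≥ r − (2 ln n)/n, and consequently the winding fraction satisfies wf(X_n, r) ≥ r − (2 ln n)/n with probability at least 1 − 1/n. -/
/-!
If some sample point lies at clockwise distance in `[r - ε, r)` from `x`, then `f_r(x)`, the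
furthest sample point at distance `< r`, is at distance at least `r - ε`; so every step of every
orbit advances by at least `r - ε`, and so does the average over a periodic orbit. For a fixed
sample point, the other `n - 1` points independently miss that arc of length `ε` with
probability `(1 - ε)^(n - 1)`, which for `ε = 2 ln n / n` is at most `n⁻²`, using
`log (1 - x) ≤ -x - x²/2`. A union bound over the `n` points leaves failure probability `≤ 1/n`.
-/

open MeasureTheory

noncomputable section

/-- The cyclic system map `f_r : X → X`: each `x` is sent to the clockwise furthest point of
`X` within clockwise distance less than `r` (and fixed if no such maximizer exists). -/
noncomputable def frMap (X : Finset (AddCircle (1:ℝ))) (r : ℝ)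
    (x : AddCircle (1:ℝ)) : AddCircle (1:ℝ) :=
  if h : ∃ y ∈ X, cdist x y < r ∧ ∀ z ∈ X, cdist x z < r → cdist x z ≤ cdist x y then
    h.choose
  else x

open Set

namespace Real

lemma log_one_sub_le_neg_add_sq_div_two {x : ℝ} (h₀ : 0 ≤ x) (h₁ : x < 1) :
    log (1 - x) ≤ -(x + x ^ 2 / 2) := by
  have hs := hasSum_pow_div_log_of_abs_lt_one (by rwa [abs_of_nonneg h₀])
  have := sum_le_hasSum (Finset.range 2) (fun i _ => by positivity) hs
  norm_num [Finset.sum_range_succ] at this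
  linarith

lemma log_lt_self_div_two {y : ℝ} (hy : 0 < y) : log y < y / 2 := by
  rw [log_lt_iff_lt_exp hy]
  nlinarith [quadratic_le_exp_of_nonneg (x := y / 2) (by positivity)]

lemma one_sub_two_log_div_pow_le {n : ℕ} (hn : 3 ≤ n) :
    (1 - 2 * log n / n) ^ (n - 1) ≤ 1 / (n : ℝ) ^ 2 := by
  have hn₀ : (0 : ℝ) < n := by positivity
  set x := 2 * log n / n with hx
  have hx₀ : 0 ≤ x := by positivity
  have hx₁ : x < 1 := by
    rw [hx, div_lt_one hn₀]; linarith [log_lt_self_div_two hn₀]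
  -- At `n = 3` the quadratic term is too weak, but `log 3 ≥ 1` already gives `1 - x ≤ 1/3`.
  rcases hn.eq_or_lt with rfl | hn₄
  · have hlog : 1 ≤ log 3 := by
      rw [le_log_iff_exp_le (by norm_num)]; linarith [exp_one_lt_d9]
    have : 1 - x ≤ 1 / 3 := by rw [hx]; push_cast; linarith
    calc (1 - x) ^ (3 - 1) ≤ (1 / 3 : ℝ) ^ 2 := pow_le_pow_left₀ (by linarith) this 2
      _ = 1 / ((3 : ℕ) : ℝ) ^ 2 := by norm_num
  · -- `log n ≥ log 4 > 4/3` gives `(n - 1) log n ≥ n`, which is what the quadratic term needs.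
    have hlog : 4 / 3 < log n := by
      have : log 4 ≤ log n := log_le_log (by norm_num) (by exact_mod_cast hn₄)
      have : log 4 = 2 * log 2 := by
        rw [show (4 : ℝ) = 2 ^ 2 by norm_num, log_pow]; norm_num
      linarith [log_two_gt_d9]
    have hcast : ((n - 1 : ℕ) : ℝ) = n - 1 := by
      rw [Nat.cast_sub (by omega), Nat.cast_one]
    have hkey : 2 * log n ≤ ((n - 1 : ℕ) : ℝ) * (x + x ^ 2 / 2) := by
      have hn₄' : (4 : ℝ) ≤ n := by exact_mod_cast hn₄
      have : ((n : ℝ) - 1) * (x + x ^ 2 / 2) - 2 * log n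
          = 2 * log n * ((n - 1) * log n - n) / n ^ 2 := by
        rw [hx]; field_simp; ring
      rw [hcast]
      nlinarith [div_nonneg (mul_nonneg (by linarith : 0 ≤ 2 * log n)
        (by nlinarith : (0 : ℝ) ≤ (n - 1) * log n - n)) (sq_nonneg (n : ℝ))]
    calc (1 - x) ^ (n - 1) ≤ exp (-(x + x ^ 2 / 2)) ^ (n - 1) := by
          refine pow_le_pow_left₀ (by linarith) ?_ _
          rw [← exp_log (by linarith : 0 < 1 - x)]
          exact exp_le_exp.mpr (log_one_sub_le_neg_add_sq_div_two hx₀ hx₁)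
      _ = exp (-(((n - 1 : ℕ) : ℝ) * (x + x ^ 2 / 2))) := by rw [← exp_nat_mul]; ring_nf
      _ ≤ exp (-log ((n : ℝ) ^ 2)) := by rw [log_pow]; push_cast; gcongr
      _ = 1 / (n : ℝ) ^ 2 := by rw [exp_neg, exp_log (by positivity), one_div]

end Real

lemma volume_forall_succAbove_mem {α : Type*} [MeasureSpace α]
    [IsProbabilityMeasure (volume : Measure α)] {N : ℕ} (i : Fin (N + 1)) {S : Set (α × α)}
    (hS : MeasurableSet S) {p : ENNReal} (hp : ∀ x, volume (Prod.mk x ⁻¹' S) = p) :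
    volume {ω : Fin (N + 1) → α | ∀ k, (ω i, ω (i.succAbove k)) ∈ S} = p ^ N := by
  set T : Set (α × (Fin N → α)) := {q | ∀ k, (q.1, q.2 k) ∈ S}
  have hT : MeasurableSet T := by
    have : T = ⋂ k, (fun q : α × (Fin N → α) => (q.1, q.2 k)) ⁻¹' S := by ext; simp [T]
    rw [this]
    exact .iInter fun k =>
      (measurable_fst.prodMk ((measurable_pi_apply k).comp measurable_snd)) hS
  have hsection : ∀ x, volume (Prod.mk x ⁻¹' T) = p ^ N := by
    intro x
    have : Prod.mk x ⁻¹' T = Set.pi univ fun _ => Prod.mk x ⁻¹' S := by ext; simp [T]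
    rw [this, volume_pi_pi, Finset.prod_congr rfl fun k _ => hp x, Finset.prod_const,
      Finset.card_univ, Fintype.card_fin]
  have hpre : {ω : Fin (N + 1) → α | ∀ k, (ω i, ω (i.succAbove k)) ∈ S}
      = MeasurableEquiv.piFinSuccAbove (fun _ => α) i ⁻¹' T := by
    ext ω; simp [T, MeasurableEquiv.piFinSuccAbove_apply, Fin.insertNthEquiv, Fin.removeNth]
  rw [hpre, (volume_preserving_piFinSuccAbove (fun _ => α) i).measure_preimage
    hT.nullMeasurableSet, Measure.volume_eq_prod, Measure.prod_apply hT]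
  simp [hsection]

lemma ofReal_one_sub_le_measure_compl {α : Type*} [MeasurableSpace α] {μ : Measure α}
    [IsProbabilityMeasure μ] {s : Set α} {p : ℝ} (hp : 0 ≤ p) (hs : μ s ≤ ENNReal.ofReal p) :
    ENNReal.ofReal (1 - p) ≤ μ sᶜ :=
  calc ENNReal.ofReal (1 - p) = 1 - ENNReal.ofReal p := by
        rw [ENNReal.ofReal_sub _ hp, ENNReal.ofReal_one]
    _ ≤ 1 - μ s := tsub_le_tsub_left hs 1
    _ ≤ μ sᶜ := by rw [tsub_le_iff_left, ← measure_univ (μ := μ)]; exact measure_univ_le_add_compl s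

instance : IsProbabilityMeasure (volume : Measure (AddCircle (1:ℝ))) :=
  ⟨UnitAddCircle.measure_univ⟩

lemma cdist_zero_coe (t : ℝ) : cdist 0 (t : AddCircle (1:ℝ)) = Int.fract t := by
  simp [cdist, AddCircle.coe_equivIco_mk_apply]

lemma cdist_self (x : AddCircle (1:ℝ)) : cdist x x = 0 := by
  simpa [cdist] using cdist_zero_coe 0

lemma cdist_eq_cdist_zero_sub (x y : AddCircle (1:ℝ)) : cdist x y = cdist 0 (y - x) := by
  rw [cdist, cdist, sub_zero]

lemma measurable_cdist :
    Measurable fun p : AddCircle (1:ℝ) × AddCircle (1:ℝ) => cdist p.1 p.2 :=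
  measurable_subtype_coe.comp
    ((AddCircle.measurableEquivIco 1 0).measurable.comp (measurable_snd.sub measurable_fst))

def arc (x : AddCircle (1:ℝ)) (a b : ℝ) : Set (AddCircle (1:ℝ)) :=
  {z | cdist x z ∈ Ico a b}

lemma measurableSet_arc (x : AddCircle (1:ℝ)) (a b : ℝ) : MeasurableSet (arc x a b) :=
  (measurable_cdist.comp measurable_prodMk_left) measurableSet_Ico

lemma mem_arc_self {x : AddCircle (1:ℝ)} {a b : ℝ} : x ∈ arc x a b ↔ a ≤ 0 ∧ 0 < b := by
  simp [arc, cdist_self]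

-- On the fundamental domain `(0, 1]` the clockwise distance from `0` is `t ↦ fract t`,
-- which is the identity except at `t = 1`, excluded by `0 < a`.
lemma volume_arc {a b : ℝ} (ha : 0 < a) (hb : b ≤ 1) (x : AddCircle (1:ℝ)) :
    volume (arc x a b) = ENNReal.ofReal (b - a) := by
  have htrans : arc x a b = (fun z => -x + z) ⁻¹' arc 0 a b := by
    ext z; simp [arc, cdist_eq_cdist_zero_sub x z, neg_add_eq_sub]
  rw [htrans, measure_preimage_add,
    AddCircle.add_projection_respects_measure 1 0 (measurableSet_arc 0 a b)]
  have hdomain : QuotientAddGroup.mk ⁻¹' arc 0 a b ∩ Ioc 0 (0 + 1) = Ico a b := by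
    ext t
    simp only [arc, mem_inter_iff, mem_preimage, mem_ofPred_eq, cdist_zero_coe, mem_Ioc,
      zero_add]
    constructor
    · rintro ⟨hfract, ht₀, ht₁⟩
      rcases ht₁.lt_or_eq with ht₁ | rfl
      · rwa [Int.fract_eq_self.mpr ⟨ht₀.le, ht₁⟩] at hfract
      · simp at hfract; linarith [hfract.1]
    · rintro ⟨hat, htb⟩
      have ht₁ : t < 1 := htb.trans_le hb
      rw [Int.fract_eq_self.mpr ⟨by linarith, ht₁⟩]
      exact ⟨⟨hat, htb⟩, by linarith, ht₁.le⟩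
  rw [hdomain, Real.volume_Ico]

lemma volume_forall_notMem_arc {N : ℕ} (i : Fin (N + 1)) {a b : ℝ} (ha : 0 < a) (hb : b ≤ 1) :
    volume {ω : Fin (N + 1) → AddCircle (1:ℝ) | ∀ j, ω j ∉ arc (ω i) a b}
      = (1 - ENNReal.ofReal (b - a)) ^ N := by
  have hS : MeasurableSet {q : AddCircle (1:ℝ) × AddCircle (1:ℝ) | q.2 ∉ arc q.1 a b} :=
    (measurable_cdist measurableSet_Ico).compl
  have hset : {ω : Fin (N + 1) → AddCircle (1:ℝ) | ∀ j, ω j ∉ arc (ω i) a b}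
      = {ω | ∀ k, (ω i, ω (i.succAbove k)) ∈ {q : AddCircle (1:ℝ) × _ | q.2 ∉ arc q.1 a b}} := by
    ext ω
    simp only [mem_ofPred_eq, Fin.forall_iff_succAbove i, mem_arc_self, not_and, not_lt]
    exact and_iff_right fun h => absurd h ha.not_ge
  rw [hset, volume_forall_succAbove_mem i hS fun x => ?_]
  rw [show Prod.mk x ⁻¹' _ = (arc x a b)ᶜ from rfl,
    prob_compl_eq_one_sub (measurableSet_arc x a b), volume_arc ha hb]

lemma volume_forall_notMem_arc_le {n : ℕ} (hn : 3 ≤ n) (i : Fin n) {r : ℝ} (hr₀ : 0 < r)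
    (hr₁ : r ≤ 1) :
    volume {ω : Fin n → AddCircle (1:ℝ) | ∀ j, ω j ∉ arc (ω i) (r - 2 * Real.log n / n) r}
      ≤ ENNReal.ofReal (1 / (n : ℝ) ^ 2) := by
  set ε := 2 * Real.log n / n
  rcases le_or_gt r ε with hrε | hεr
  · have : {ω : Fin n → AddCircle (1:ℝ) | ∀ j, ω j ∉ arc (ω i) (r - ε) r} = ∅ :=
      eq_empty_of_forall_notMem fun ω hω => hω i (mem_arc_self.mpr ⟨by linarith, hr₀⟩)
    simp [this]
  obtain ⟨N, rfl⟩ : ∃ N, n = N + 1 := ⟨n - 1, by omega⟩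
  have hε : 0 ≤ ε := by positivity
  rw [volume_forall_notMem_arc i (by linarith) hr₁, sub_sub_cancel,
    ← ENNReal.ofReal_one, ← ENNReal.ofReal_sub _ hε, ← ENNReal.ofReal_pow (by linarith)]
  have := Real.one_sub_two_log_div_pow_le hn
  rw [Nat.add_sub_cancel] at this
  exact ENNReal.ofReal_le_ofReal this

section CyclicSystem

variable {X : Finset (AddCircle (1:ℝ))} {r : ℝ} {x : AddCircle (1:ℝ)}

lemma frMap_spec (hr : 0 < r) (hx : x ∈ X) :
    frMap X r x ∈ X ∧ ∀ z ∈ X, cdist x z < r → cdist x z ≤ cdist x (frMap X r x) := by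
  classical
  obtain ⟨y, hy, hmax⟩ := (X.filter fun y => cdist x y < r).exists_max_image (cdist x)
    ⟨x, by simp [hx, cdist_self, hr]⟩
  simp only [Finset.mem_filter] at hy hmax
  have h : ∃ y ∈ X, cdist x y < r ∧ ∀ z ∈ X, cdist x z < r → cdist x z ≤ cdist x y :=
    ⟨y, hy.1, hy.2, fun z hz hzr => hmax z ⟨hz, hzr⟩⟩
  rw [frMap, dif_pos h]
  exact ⟨h.choose_spec.1, h.choose_spec.2.2⟩

lemma mapsTo_frMap (hr : 0 < r) : MapsTo (frMap X r) X X :=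
  fun _ hx => (frMap_spec hr hx).1

lemma le_cdist_frMap {a : ℝ} {y : AddCircle (1:ℝ)} (hr : 0 < r) (hx : x ∈ X) (hy : y ∈ X)
    (hxy : y ∈ arc x a r) : a ≤ cdist x (frMap X r x) :=
  hxy.1.trans ((frMap_spec hr hx).2 y hy hxy.2)

end CyclicSystem

lemma le_sum_range_iterate_div {α : Type*} {s : Set α} {f : α → α} (hf : MapsTo f s s)
    {g : α → α → ℝ} {c : ℝ} (hg : ∀ x ∈ s, c ≤ g x (f x)) {x : α} (hx : x ∈ s) {m : ℕ}
    (hm : 1 ≤ m) : c ≤ (∑ j ∈ Finset.range m, g (f^[j] x) (f^[j + 1] x)) / m := by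
  rw [le_div_iff₀ (by exact_mod_cast hm)]
  calc c * m = (Finset.range m).card • c := by simp [mul_comm]
    _ ≤ ∑ j ∈ Finset.range m, g (f^[j] x) (f^[j + 1] x) := by
      refine Finset.card_nsmul_le_sum _ _ _ fun j _ => ?_
      rw [Function.iterate_succ_apply']
      exact hg _ (hf.iterate j hx)

/-- For `X_n` a sample of `n ≥ 3` independent uniform points on `S¹` and `0 < r ≤ 1`:
with probability at least `1 − 1/n`, every sample point satisfies
`d⃗(x, f_r(x)) ≥ r − (2 ln n)/n`, and consequently the winding fraction `w/ℓ` of every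
periodic orbit of `f_r` (winding number over orbit length) is at least `r − (2 ln n)/n`. -/
theorem winding_fraction_lower_bound (n : ℕ) (hn : 3 ≤ n) (r : ℝ)
    (hr0 : 0 < r) (hr1 : r ≤ 1) :
    ENNReal.ofReal (1 - 1 / (n : ℝ)) ≤
      volume {ω : Fin n → AddCircle (1:ℝ) |
        (∀ i : Fin n,
          r - 2 * Real.log n / n ≤
            cdist (ω i) (frMap (Finset.image ω Finset.univ) r (ω i))) ∧
        (∀ i : Fin n, ∀ m : ℕ, 1 ≤ m →
          (frMap (Finset.image ω Finset.univ) r)^[m] (ω i) = ω i →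
          r - 2 * Real.log n / n ≤
            (∑ j ∈ Finset.range m,
                cdist ((frMap (Finset.image ω Finset.univ) r)^[j] (ω i))
                  ((frMap (Finset.image ω Finset.univ) r)^[j+1] (ω i))) / m)} := by
  set ε := 2 * Real.log n / n
  set bad := ⋃ i, {ω : Fin n → AddCircle (1:ℝ) | ∀ j, ω j ∉ arc (ω i) (r - ε) r}
  have hbad : volume bad ≤ ENNReal.ofReal (1 / n) :=
    calc volume bad ≤ ∑ i : Fin n, ENNReal.ofReal (1 / (n : ℝ) ^ 2) :=
          (measure_iUnion_fintype_le _ _).trans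
            (Finset.sum_le_sum fun i _ => volume_forall_notMem_arc_le hn i hr0 hr1)
      _ = ENNReal.ofReal (1 / n) := by
          rw [Finset.sum_const, Finset.card_univ, Fintype.card_fin, nsmul_eq_mul,
            ← ENNReal.ofReal_natCast, ← ENNReal.ofReal_mul (by positivity)]
          congr 1; field_simp
  refine (ofReal_one_sub_le_measure_compl (by positivity) hbad).trans
    (measure_mono fun ω hω => ?_)
  simp only [bad, mem_compl_iff, mem_iUnion, mem_ofPred_eq, not_exists, not_forall,
    not_not] at hω
  have hmem : ∀ i, ω i ∈ Finset.image ω Finset.univ := fun i => by simp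
  have hstep : ∀ x ∈ (Finset.image ω Finset.univ : Set _),
      r - ε ≤ cdist x (frMap (Finset.image ω Finset.univ) r x) := by
    simp only [Finset.coe_image, Finset.coe_univ, image_univ, forall_mem_range]
    intro i
    obtain ⟨j, hj⟩ := hω i
    exact le_cdist_frMap hr0 (hmem i) (hmem j) hj
  exact ⟨fun i => hstep _ (hmem i), fun i m hm _ =>
    le_sum_range_iterate_div (mapsTo_frMap hr0) hstep (hmem i) hm⟩
end
end
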